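/- arXiv:1603.09333 — 9 statements merged into one kernel-verified Lean document; each statement's English description precedes it below -/
import Mathlib

section
/- Let S be a finite semigroup, let C be an ideal of S that is a Clifford semigroup, and suppose there is d ∈ ℕ such that every product of d elements of S lies in C (i.e., S is an ideal extension of the Clifford semigroup C by a nilpotent semigroup). Then the ideal of S generated by the idempotents of S equals C; in particular, the ideal generated by the idempotents of S is a Clifford semigroup. -/
/-- Product of a nonempty list of semigroup elements: `a * l₁ * l₂ * ⋯`. -/
def sgProd {S : Type*} [Semigroup S] (a : S) (l : List S) : S :=
  l.foldl (· * ·) a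

/-- `spow a m = a ^ m` for `m ≥ 1` (with junk value `a` at `m = 0`). -/
def spow {S : Type*} [Semigroup S] (a : S) : ℕ → S
  | 0 => a
  | 1 => a
  | (n + 2) => spow a (n + 1) * a

/-- A (two-sided) ideal of a semigroup: a nonempty subset absorbing
multiplication on both sides. -/
def IsIdeal {S : Type*} [Semigroup S] (I : Set S) : Prop :=
  I.Nonempty ∧ ∀ s : S, ∀ x ∈ I, s * x ∈ I ∧ x * s ∈ I

/-- A subset of a semigroup that is a subsemigroup which is a group. -/
def IsGroupSubset {S : Type*} [Semigroup S] (G : Set S) : Prop :=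
  (∀ x ∈ G, ∀ y ∈ G, x * y ∈ G) ∧
    ∃ e ∈ G, (∀ x ∈ G, e * x = x ∧ x * e = x) ∧
      ∀ x ∈ G, ∃ y ∈ G, x * y = e ∧ y * x = e

/-- A subset of a semigroup that is a Clifford semigroup in its own right:
it is closed under multiplication, completely regular (every element lies in a
subsemigroup which is a group), and its idempotents are central in it. -/
def IsCliffordSubset {S : Type*} [Semigroup S] (C : Set S) : Prop :=
  (∀ x ∈ C, ∀ y ∈ C, x * y ∈ C) ∧
    (∀ x ∈ C, ∃ G ⊆ C, IsGroupSubset G ∧ x ∈ G) ∧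
    (∀ e ∈ C, e * e = e → ∀ s ∈ C, e * s = s * e)

/-- A semigroup is a Clifford semigroup. -/
def IsCliffordSG (C : Type*) [Semigroup C] : Prop :=
  IsCliffordSubset (Set.univ : Set C)

/-- A semigroup is nilpotent: for some `d`, any two products of at least `d`
elements are equal. -/
def IsNilpotentSG (N : Type*) [Semigroup N] : Prop :=
  ∃ d : ℕ, ∀ (a b : N) (l l' : List N),
    d ≤ l.length + 1 → d ≤ l'.length + 1 → sgProd a l = sgProd b l'


lemma sgProd_replicate {S : Type*} [Semigroup S] (e a : S) (ha : a * e = a) :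
    ∀ n, sgProd a (List.replicate n e) = a := by
  intro n
  induction n generalizing a with
  | zero => rfl
  | succ n ih =>
    simp only [List.replicate_succ, sgProd, List.foldl_cons]
    have := ih (a * e) (by rw [ha, ha])
    simpa [sgProd, ha] using this

/-- If `C` is an ideal of a finite semigroup `S` that is a Clifford
semigroup, and every product of `d` (hence of at least `d`) elements of `S` lies
in `C`, then the ideal of `S` generated by the idempotents equals `C`; in
particular it is a Clifford semigroup. -/
theorem stmt0 {S : Type*} [Semigroup S] [Finite S] [Nonempty S]
    (C : Set S) (hCideal : IsIdeal C) (hCcliff : IsCliffordSubset C)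
    (d : ℕ) (hd : ∀ (a : S) (l : List S), d ≤ l.length + 1 → sgProd a l ∈ C) :
    ⋂₀ {I : Set S | IsIdeal I ∧ {e : S | e * e = e} ⊆ I} = C ∧
    IsCliffordSubset (⋂₀ {I : Set S | IsIdeal I ∧ {e : S | e * e = e} ⊆ I}) := by
  have hidem : {e : S | e * e = e} ⊆ C := by
    intro e he
    have := hd e (List.replicate d e) (by simp)
    rwa [sgProd_replicate e e he d] at this
  have hsub : ⋂₀ {I : Set S | IsIdeal I ∧ {e : S | e * e = e} ⊆ I} ⊆ C :=
    Set.sInter_subset_of_mem ⟨hCideal, hidem⟩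
  have hsup : C ⊆ ⋂₀ {I : Set S | IsIdeal I ∧ {e : S | e * e = e} ⊆ I} := by
    intro x hx
    intro I hI
    obtain ⟨hIideal, hIidem⟩ := hI
    obtain ⟨G, hGC, ⟨hGmul, e, heG, hid, hinv⟩, hxG⟩ := hCcliff.2.1 x hx
    have heI : e ∈ I := hIidem ((hid e heG).1)
    have : x * e ∈ I := (hIideal.2 x e heI).1
    rwa [(hid x hxG).2] at this
  have heq : ⋂₀ {I : Set S | IsIdeal I ∧ {e : S | e * e = e} ⊆ I} = C :=
    Set.Subset.antisymm hsub hsup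
  exact ⟨heq, heq ▸ hCcliff⟩
end

section
/- Let S be a finite semigroup such that the ideal of S generated by the idempotents of S is a Clifford semigroup. Then all idempotents of S are central in S, and for every idempotent e ∈ S and every a ∈ S with ea = a, the subsemigroup ⟨a⟩ generated by a is a group (equivalently, a = a^m for some m ≥ 2). -/
section Semigroup

variable {S : Type*} [Semigroup S]

lemma spow_add_two (a : S) : ∀ k, spow a (k + 2) = a * spow a (k + 1)
  | 0 => rfl
  | k + 1 =>
    calc spow a (k + 3) = a * spow a (k + 1) * a := congrArg (· * a) (spow_add_two a k)
      _ = a * spow a (k + 2) := mul_assoc _ _ _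

lemma subset_sInter_isIdeal (X : Set S) : X ⊆ ⋂₀ {I : Set S | IsIdeal I ∧ X ⊆ I} :=
  fun _ hx => Set.mem_sInter.mpr fun _ hI => hI.2 hx

lemma mul_mem_sInter_isIdeal (X : Set S) (s : S) {x : S}
    (hx : x ∈ ⋂₀ {I : Set S | IsIdeal I ∧ X ⊆ I}) :
    s * x ∈ ⋂₀ {I : Set S | IsIdeal I ∧ X ⊆ I} ∧ x * s ∈ ⋂₀ {I : Set S | IsIdeal I ∧ X ⊆ I} :=
  ⟨Set.mem_sInter.mpr fun I hI => (hI.1.2 s x (Set.mem_sInter.mp hx I hI)).1,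
    Set.mem_sInter.mpr fun I hI => (hI.1.2 s x (Set.mem_sInter.mp hx I hI)).2⟩

lemma mul_comm_of_idempotent_mem_absorbing {J : Set S}
    (hJ : ∀ s : S, ∀ x ∈ J, s * x ∈ J ∧ x * s ∈ J)
    (hcent : ∀ e ∈ J, e * e = e → ∀ s ∈ J, e * s = s * e)
    {e : S} (heJ : e ∈ J) (he : e * e = e) (s : S) : e * s = s * e :=
  calc e * s = e * (e * s) := by rw [← mul_assoc, he]
    _ = e * s * e := hcent e heJ he _ (hJ s e heJ).2
    _ = s * e * e := by rw [mul_assoc, hcent e heJ he _ (hJ s e heJ).1, mul_assoc]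
    _ = s * e := by rw [mul_assoc, he]

lemma spow_mem {G : Set S} (hG : ∀ x ∈ G, ∀ y ∈ G, x * y ∈ G) {a : S} (ha : a ∈ G) :
    ∀ n, spow a n ∈ G
  | 0 => ha
  | 1 => ha
  | n + 2 => hG _ (spow_mem hG ha (n + 1)) a ha

lemma IsGroupSubset.exists_mul_spow_add_two_eq {G : Set S} (hG : IsGroupSubset G) {a : S}
    (ha : a ∈ G) : ∃ y : S, ∀ k, y * spow a (k + 2) = spow a (k + 1) := by
  obtain ⟨hmul, f, -, hf, hinv⟩ := hG
  obtain ⟨y, -, -, hya⟩ := hinv a ha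
  refine ⟨y, fun k => ?_⟩
  rw [spow_add_two, ← mul_assoc, hya, (hf _ (spow_mem hmul ha _)).1]

lemma eq_spow_of_spow_eq {a y : S} (hy : ∀ k, y * spow a (k + 2) = spow a (k + 1))
    (k : ℕ) : ∀ i, spow a (i + 1) = spow a (k + i + 1) → a = spow a (k + 1)
  | 0, h => h
  | i + 1, h => by
    refine eq_spow_of_spow_eq hy k i ?_
    rw [← hy i, ← hy (k + i), h]
    rfl

lemma exists_eq_spow_of_mul_spow_add_two_eq [Finite S] {a y : S}
    (hy : ∀ k, y * spow a (k + 2) = spow a (k + 1)) : ∃ m, 2 ≤ m ∧ a = spow a m := by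
  obtain ⟨i, j, hij, hspow⟩ :=
    Finite.exists_ne_map_eq_of_infinite (fun n : ℕ => spow a (n + 1))
  have key : ∀ i j, i < j → spow a (i + 1) = spow a (j + 1) → ∃ m, 2 ≤ m ∧ a = spow a m :=
    fun i j hlt h => ⟨j - i + 1, by omega,
      eq_spow_of_spow_eq hy _ i (by rwa [Nat.sub_add_cancel hlt.le])⟩
  rcases Nat.lt_or_gt_of_ne hij with hlt | hlt
  · exact key i j hlt hspow
  · exact key j i hlt hspow.symm

end Semigroup

theorem stmt1_general {S : Type*} [Semigroup S] [Finite S]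
    (hI : IsCliffordSubset (⋂₀ {I : Set S | IsIdeal I ∧ {e : S | e * e = e} ⊆ I})) :
    (∀ e s : S, e * e = e → e * s = s * e) ∧
    (∀ e a : S, e * e = e → e * a = a → ∃ m, 2 ≤ m ∧ a = spow a m) := by
  obtain ⟨-, hreg, hcent⟩ := hI
  have hJ := mul_mem_sInter_isIdeal {e : S | e * e = e}
  have hE := subset_sInter_isIdeal {e : S | e * e = e}
  refine ⟨fun e s he => mul_comm_of_idempotent_mem_absorbing hJ hcent (hE he) he s,
    fun e a he hea => ?_⟩
  have haJ := (hJ a (hE he)).2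
  rw [hea] at haJ
  obtain ⟨G, -, hG, haG⟩ := hreg a haJ
  obtain ⟨y, hy⟩ := hG.exists_mul_spow_add_two_eq haG
  exact exists_eq_spow_of_mul_spow_add_two_eq hy

/-- If the ideal of a finite semigroup `S` generated by the
idempotents is a Clifford semigroup, then all idempotents of `S` are central,
and whenever `e` is idempotent and `e * a = a`, the subsemigroup generated by
`a` is a group (equivalently `a = a ^ m` for some `m ≥ 2`). -/
theorem stmt1 {S : Type*} [Semigroup S] [Finite S] [Nonempty S]
    (hI : IsCliffordSubset (⋂₀ {I : Set S | IsIdeal I ∧ {e : S | e * e = e} ⊆ I})) :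
    (∀ e s : S, e * e = e → e * s = s * e) ∧
    (∀ e a : S, e * e = e → e * a = a → ∃ m, 2 ≤ m ∧ a = spow a m) :=
  stmt1_general hI
end

section
/- Let S be a finite semigroup in which all idempotents are central and such that for every idempotent e ∈ S and every a ∈ S with ea = a, the subsemigroup ⟨a⟩ generated by a is a group. Then there exist a finite Clifford semigroup C, a finite nilpotent semigroup N, and an injective semigroup homomorphism from S into the direct product C × N. -/
private lemma coe_spow {S : Type*} [Semigroup S] (a : S) :
    ∀ m, 1 ≤ m → ((spow a m : S) : WithOne S) = (a : WithOne S) ^ m := by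
  intro m hm
  induction m with
  | zero => omega
  | succ n ih =>
    match n, ih with
    | 0, _ => simp [spow]
    | (k+1), ih =>
      have h := ih (by omega)
      show ((spow a (k+2) : S) : WithOne S) = _
      rw [show spow a (k+2) = spow a (k+1) * a from rfl, WithOne.coe_mul, h]
      exact (pow_succ _ _).symm

private lemma pw_shift {M : Type*} [Monoid M] (x : M) (a p : ℕ) (h : x ^ a = x ^ (a + p)) :
    ∀ j r : ℕ, x ^ (a + j) = x ^ (a + j + r * p) := by
  have step : ∀ j, x ^ (a + j) = x ^ (a + j + p) := by
    intro j
    calc x ^ (a + j) = x ^ a * x ^ j := pow_add x a j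
    _ = x ^ (a + p) * x ^ j := by rw [h]
    _ = x ^ (a + j + p) := by rw [← pow_add]; congr 1; omega
  intro j r
  induction r with
  | zero => simp
  | succ n ihn =>
    calc x ^ (a + j) = x ^ (a + j + n * p) := ihn
    _ = x ^ (a + (j + n * p)) := by congr 1; omega
    _ = x ^ (a + (j + n * p) + p) := step _
    _ = x ^ (a + j + (n + 1) * p) := by congr 1; ring_nf

private lemma sgProd_map {S T : Type*} [Semigroup S] [Semigroup T] (h : S → T)
    (hh : ∀ x y, h (x * y) = h x * h y) (a : S) (l : List S) :
    sgProd (h a) (l.map h) = h (sgProd a l) := by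
  induction l generalizing a with
  | nil => rfl
  | cons b t ih =>
    show sgProd (h a * h b) (t.map h) = h (sgProd (a * b) t)
    rw [← hh]; exact ih (a * b)

private lemma shrink (X : Type*) [Semigroup X] [Finite X] :
    ∃ (C : Type) (iC : Semigroup C) (h : X → C), Finite C ∧ Function.Bijective h ∧
      ∀ a b : X, h (a * b) = h a * h b := by
  obtain ⟨n, ⟨e⟩⟩ := Finite.exists_equiv_fin X
  letI : Mul (Fin n) := ⟨fun a b => e (e.symm a * e.symm b)⟩
  letI iC : Semigroup (Fin n) :=
    { mul_assoc := by
        intro a b c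
        show e (e.symm (e _) * _) = e (_ * e.symm (e _))
        simp [mul_assoc] }
  refine ⟨Fin n, iC, e, inferInstance, e.bijective, fun a b => ?_⟩
  show e (a * b) = e (e.symm (e a) * e.symm (e b))
  simp

private lemma clifford_transfer {X C : Type*} [Semigroup X] [Semigroup C] (h : X → C)
    (hb : Function.Bijective h) (hm : ∀ a b, h (a * b) = h a * h b)
    (hX : IsCliffordSG X) : IsCliffordSG C := by
  obtain ⟨-, hX2, hX3⟩ := hX
  refine ⟨fun _ _ _ _ => trivial, ?_, ?_⟩
  · rintro y -
    obtain ⟨x, rfl⟩ := hb.2 y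
    obtain ⟨G, -, ⟨Gcl, e, heG, hid, hinv⟩, hxG⟩ := hX2 x trivial
    refine ⟨h '' G, Set.subset_univ _, ⟨?_, h e, ⟨e, heG, rfl⟩, ?_, ?_⟩, ⟨x, hxG, rfl⟩⟩
    · rintro - ⟨g1, hg1, rfl⟩ - ⟨g2, hg2, rfl⟩
      exact ⟨g1 * g2, Gcl g1 hg1 g2 hg2, hm g1 g2⟩
    · rintro - ⟨g, hg, rfl⟩
      constructor
      · rw [← hm]; exact congrArg h (hid g hg).1
      · rw [← hm]; exact congrArg h (hid g hg).2
    · rintro - ⟨g, hg, rfl⟩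
      obtain ⟨y, hyG, hy1, hy2⟩ := hinv g hg
      exact ⟨h y, ⟨y, hyG, rfl⟩, by rw [← hm, hy1], by rw [← hm, hy2]⟩
  · rintro e' - hee' s' -
    obtain ⟨x, rfl⟩ := hb.2 e'
    obtain ⟨s, rfl⟩ := hb.2 s'
    have hx : x * x = x := hb.1 (by rw [hm]; exact hee')
    rw [← hm, ← hm]
    exact congrArg h (hX3 x trivial hx s trivial)

private lemma nilpotent_transfer {X C : Type*} [Semigroup X] [Semigroup C] (h : X → C)
    (hb : Function.Bijective h) (hm : ∀ a b, h (a * b) = h a * h b)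
    (hX : IsNilpotentSG X) : IsNilpotentSG C := by
  obtain ⟨d, hd⟩ := hX
  refine ⟨d, fun a b l l' hl hl' => ?_⟩
  set g := Function.surjInv hb.2 with hg
  have hmap : ∀ L : List C, (L.map g).map h = L := by
    intro L
    rw [List.map_map]
    have : h ∘ g = id := funext fun c => Function.surjInv_eq hb.2 c
    rw [this, List.map_id]
  have ha : h (g a) = a := Function.surjInv_eq hb.2 a
  have hbb : h (g b) = b := Function.surjInv_eq hb.2 b
  calc sgProd a l = sgProd (h (g a)) ((l.map g).map h) := by rw [ha, hmap]
  _ = h (sgProd (g a) (l.map g)) := sgProd_map h hm _ _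
  _ = h (sgProd (g b) (l'.map g)) := by
      rw [hd (g a) (g b) (l.map g) (l'.map g) (by simpa using hl) (by simpa using hl')]
  _ = sgProd (h (g b)) ((l'.map g).map h) := (sgProd_map h hm _ _).symm
  _ = sgProd b l' := by rw [hbb, hmap]

/-- A finite semigroup with central idempotents in which `e * a = a`
(`e` idempotent) forces `⟨a⟩` to be a group (equivalently `a = a ^ m`, `m ≥ 2`)
embeds into a direct product of a finite Clifford semigroup and a finite
nilpotent semigroup. -/
theorem stmt2 {S : Type*} [Semigroup S] [Finite S] [Nonempty S]
    (hcen : ∀ e s : S, e * e = e → e * s = s * e)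
    (hgrp : ∀ e a : S, e * e = e → e * a = a → ∃ m, 2 ≤ m ∧ a = spow a m) :
    ∃ (C N : Type) (iC : Semigroup C) (iN : Semigroup N) (f : S → C × N),
      Finite C ∧ Finite N ∧ @IsCliffordSG C iC ∧ @IsNilpotentSG N iN ∧
      Function.Injective f ∧
      ∀ x y : S, f (x * y) =
        (iC.toMul.mul (f x).1 (f y).1, iN.toMul.mul (f x).2 (f y).2) := by
  classical
  -- uniform exponent K
  obtain ⟨m1, m2, hne, hmm⟩ :=
    Finite.exists_ne_map_eq_of_infinite (fun (n : ℕ) => (fun s : S => spow s (n + 1)))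
  have base : ∃ a p : ℕ, 1 ≤ a ∧ 1 ≤ p ∧ ∀ s : S, ((s : WithOne S)) ^ a = (s : WithOne S) ^ (a + p) := by
    rcases Nat.lt_or_ge m1 m2 with hlt | hge
    · refine ⟨m1 + 1, m2 - m1, by omega, by omega, fun s => ?_⟩
      have h1 := congrFun hmm s
      have h2 : ((spow s (m1+1) : S) : WithOne S) = ((spow s (m2+1) : S) : WithOne S) := by
        rw [h1]
      rw [coe_spow s (m1+1) (by omega), coe_spow s (m2+1) (by omega)] at h2
      rw [h2]; congr 1; omega
    · have hlt : m2 < m1 := by omega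
      refine ⟨m2 + 1, m1 - m2, by omega, by omega, fun s => ?_⟩
      have h1 := congrFun hmm s
      have h2 : ((spow s (m1+1) : S) : WithOne S) = ((spow s (m2+1) : S) : WithOne S) := by
        rw [h1]
      rw [coe_spow s (m1+1) (by omega), coe_spow s (m2+1) (by omega)] at h2
      rw [← h2]; congr 1; omega
  obtain ⟨a0, p0, ha0, hp0, hbase⟩ := base
  set K := 2 * (a0 * p0) with hKdef
  have hap : 1 ≤ a0 * p0 := Nat.mul_pos ha0 hp0
  have haK : a0 ≤ K := by
    have := Nat.le_mul_of_pos_right a0 hp0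
    omega
  have hK1 : 1 ≤ K := by omega
  have hK2 : 2 ≤ K := by omega
  -- the key stability property
  have hstab : ∀ s : S, ∀ j r : ℕ, (s : WithOne S) ^ (K + j) = (s : WithOne S) ^ (K + j + r * K) := by
    have hKK : ∀ s : S, (s : WithOne S) ^ K = (s : WithOne S) ^ (K + K) := by
      intro s
      have h := pw_shift (s : WithOne S) a0 p0 (hbase s) (K - a0) (2 * a0)
      have e1 : a0 + (K - a0) = K := by omega
      rw [e1] at h
      have h2 : 2 * a0 * p0 = K := by rw [hKdef]; ring
      rwa [show K + 2 * a0 * p0 = K + K from by omega] at h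
    intro s
    exact pw_shift (s : WithOne S) K K (hKK s)
  have hidemM : ∀ s : S, (s : WithOne S) ^ K * (s : WithOne S) ^ K = (s : WithOne S) ^ K := by
    intro s
    have := (hstab s 0 1).symm
    rwa [show K + 0 + 1 * K = K + K from by omega, Nat.add_zero, pow_add] at this
  -- E s = spow s K : idempotent power
  have hE : ∀ s : S, ((spow s K : S) : WithOne S) = (s : WithOne S) ^ K :=
    fun s => coe_spow s K hK1
  have coeInj : Function.Injective (fun s : S => (s : WithOne S)) :=
    fun x y h => WithOne.coe_inj.mp h
  have hidemS : ∀ s : S, spow s K * spow s K = spow s K := by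
    intro s
    have h : ((spow s K * spow s K : S) : WithOne S) = ((spow s K : S) : WithOne S) := by
      rw [WithOne.coe_mul, hE]
      exact hidemM s
    exact WithOne.coe_inj.mp h
  -- the set of "regular" (group-bound) elements
  set Reg : Set S := {x : S | (x : WithOne S) ^ (K + 1) = (x : WithOne S)} with hRegdef
  -- e idempotent, e * a = a  ⟹  a ∈ Reg
  have hreg : ∀ e b : S, e * e = e → e * b = b → b ∈ Reg := by
    intro e b he heb
    obtain ⟨m, hm2, hmb⟩ := hgrp e b he heb
    have hx : (b : WithOne S) = (b : WithOne S) ^ m := by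
      calc (b : WithOne S) = ((spow b m : S) : WithOne S) := by rw [← hmb]
      _ = (b : WithOne S) ^ m := coe_spow b m (by omega)
    set x := (b : WithOne S) with hxdef
    have h1 : ∀ r : ℕ, x = x ^ (1 + r * (m - 1)) := by
      intro r
      induction r with
      | zero => simp
      | succ n ihn =>
        have hmsplit : 1 + (n+1) * (m-1) = (1 + n * (m-1)) + (m-1) := by ring
        refine Eq.symm ?_
        calc x ^ (1 + (n+1) * (m-1)) = x ^ (1 + n * (m-1)) * x ^ (m-1) := by
              rw [hmsplit, pow_add]
        _ = x * x ^ (m-1) := by rw [← ihn]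
        _ = x ^ (1 + (m-1)) := by rw [pow_add, pow_one]
        _ = x ^ m := by congr 1; omega
        _ = x := hx.symm
    show x ^ (K + 1) = x
    set e0 := 1 + K * (m - 1) with he0def
    have he0 : K + 1 ≤ e0 := by
      have := Nat.le_mul_of_pos_right K (show 0 < m - 1 by omega)
      omega
    have hxe0 : x = x ^ e0 := h1 K
    calc x ^ (K+1) = (x ^ e0) ^ (K+1) := by rw [← hxe0]
    _ = x ^ (e0 * (K+1)) := (pow_mul x e0 (K+1)).symm
    _ = x ^ (K + (e0 - K) + e0 * K) := by
        congr 1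
        have : e0 * (K+1) = e0 * K + e0 := by ring
        omega
    _ = x ^ (K + (e0 - K)) := (hstab b (e0 - K) e0).symm
    _ = x ^ e0 := by congr 1; omega
    _ = x := hxe0.symm
  -- identity property of the idempotent power on regular elements
  have hEid : ∀ b ∈ Reg, spow b K * b = b := by
    intro b hb
    apply WithOne.coe_inj.mp
    rw [WithOne.coe_mul, hE]
    calc (b : WithOne S) ^ K * (b : WithOne S) = (b : WithOne S) ^ (K+1) := (pow_succ _ _).symm
    _ = (b : WithOne S) := hb
  -- Reg is an ideal
  have hidl : ∀ b ∈ Reg, ∀ s : S, b * s ∈ Reg ∧ s * b ∈ Reg := by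
    intro b hb s
    have he := hidemS b
    have heb := hEid b hb
    constructor
    · apply hreg (spow b K) _ he
      rw [← mul_assoc, heb]
    · apply hreg (spow b K) _ he
      calc spow b K * (s * b) = (spow b K * s) * b := (mul_assoc _ _ _).symm
      _ = (s * spow b K) * b := by rw [hcen (spow b K) s he]
      _ = s * (spow b K * b) := mul_assoc _ _ _
      _ = s * b := by rw [heb]
  -- spow s (K+1) is regular
  have hphiReg : ∀ s : S, spow s (K+1) ∈ Reg := by
    intro s
    apply hreg (spow s K) _ (hidemS s)
    apply WithOne.coe_inj.mp
    rw [WithOne.coe_mul, hE, coe_spow s (K+1) (by omega)]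
    calc (s : WithOne S) ^ K * (s : WithOne S) ^ (K+1) = (s : WithOne S) ^ (K+1+1*K) := by
          rw [← pow_add]; congr 1; ring
    _ = (s : WithOne S) ^ (K+1) := (hstab s 1 1).symm
  -- centrality upgrades
  have hcenM : ∀ u : S, u * u = u → ∀ y : WithOne S, (u : WithOne S) * y = y * (u : WithOne S) := by
    intro u hu y
    by_cases hy : y = 1
    · simp [hy]
    · obtain ⟨t, rfl⟩ := WithOne.ne_one_iff_exists.mp hy
      rw [← WithOne.coe_mul, ← WithOne.coe_mul, hcen u t hu]
  have hcenKM : ∀ s : S, ∀ y : WithOne S, (s : WithOne S) ^ K * y = y * (s : WithOne S) ^ K := by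
    intro s y
    have h := hcenM (spow s K) (hidemS s) y
    rwa [hE] at h
  have hidempow : ∀ z : WithOne S, z * z = z → ∀ n : ℕ, z ^ (n+1) = z := by
    intro z hz n
    induction n with
    | zero => simp
    | succ k ih => rw [pow_succ, ih, hz]
  -- the map s ↦ spow s (K+1) is a homomorphism
  have hphiHom : ∀ s t : S, spow (s * t) (K+1) = spow s (K+1) * spow t (K+1) := by
    intro s t
    apply WithOne.coe_inj.mp
    rw [WithOne.coe_mul, coe_spow (s*t) (K+1) (by omega), coe_spow s (K+1) (by omega),
      coe_spow t (K+1) (by omega), WithOne.coe_mul]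
    set x := (s : WithOne S) with hxdef
    set y := (t : WithOne S) with hydef
    have hcomg : ∀ z, (x*y)^K * z = z * (x*y)^K := by
      intro z
      have h := hcenKM (s*t) z
      rwa [WithOne.coe_mul] at h
    have hcome : ∀ z, x^K * z = z * x^K := hcenKM s
    have hcomf : ∀ z, y^K * z = z * y^K := hcenKM t
    set g := (x*y)^K with hgdef
    have hgid : g * g = g := by
      have h := hidemM (s*t)
      rwa [WithOne.coe_mul] at h
    -- (★b)
    have hb : g * x ^ (K+1) = g * x := by
      have hmem : spow (s*t) K * s ∈ Reg := by
        apply hreg (spow (s*t) K) _ (hidemS (s*t))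
        rw [← mul_assoc, hidemS (s*t)]
      have h2 : ((spow (s*t) K * s : S) : WithOne S) ^ (K+1)
          = ((spow (s*t) K * s : S) : WithOne S) := hmem
      rw [WithOne.coe_mul, hE (s*t), WithOne.coe_mul] at h2
      have hc : Commute g x := hcomg x
      rw [hc.mul_pow, hidempow g hgid K] at h2
      exact h2
    -- (★c)
    have hcY : y ^ (K+1) * g = y * g := by
      have hmem : t * spow (s*t) K ∈ Reg := by
        apply hreg (spow (s*t) K) _ (hidemS (s*t))
        calc spow (s*t) K * (t * spow (s*t) K)
            = (spow (s*t) K * t) * spow (s*t) K := (mul_assoc _ _ _).symm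
        _ = (t * spow (s*t) K) * spow (s*t) K := by rw [hcen (spow (s*t) K) t (hidemS (s*t))]
        _ = t * (spow (s*t) K * spow (s*t) K) := mul_assoc _ _ _
        _ = t * spow (s*t) K := by rw [hidemS (s*t)]
      have h2 : ((t * spow (s*t) K : S) : WithOne S) ^ (K+1)
          = ((t * spow (s*t) K : S) : WithOne S) := hmem
      rw [WithOne.coe_mul, hE (s*t), WithOne.coe_mul] at h2
      have hc : Commute y g := (hcomg y).symm
      rw [hc.mul_pow, hidempow g hgid K] at h2
      exact h2
    -- (★a)
    have hefS : (spow s K * spow t K) * (spow s K * spow t K) = spow s K * spow t K := by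
      calc (spow s K * spow t K) * (spow s K * spow t K)
          = spow s K * ((spow t K * spow s K) * spow t K) := by
            rw [mul_assoc, ← mul_assoc (spow t K)]
      _ = spow s K * ((spow s K * spow t K) * spow t K) := by
            rw [hcen (spow t K) (spow s K) (hidemS t)]
      _ = (spow s K * spow s K) * (spow t K * spow t K) := by
            rw [mul_assoc (spow s K), ← mul_assoc]
      _ = spow s K * spow t K := by rw [hidemS s, hidemS t]
    have hefid : (x^K * y^K) * (x^K * y^K) = x^K * y^K := by
      have h := congrArg (fun u : S => (u : WithOne S)) hefS
      simpa only [WithOne.coe_mul, hE] using h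
    have ha : (x^K * y^K) * (x*y)^(K+1) = (x^K * y^K) * (x*y) := by
      have hmem : (spow s K * spow t K) * (s * t) ∈ Reg := by
        apply hreg _ _ hefS
        rw [← mul_assoc, hefS]
      have h2 : (((spow s K * spow t K) * (s * t) : S) : WithOne S) ^ (K+1)
          = (((spow s K * spow t K) * (s * t) : S) : WithOne S) := hmem
      rw [WithOne.coe_mul, WithOne.coe_mul, WithOne.coe_mul, hE s, hE t] at h2
      have hcef : ∀ z, (x^K * y^K) * z = z * (x^K * y^K) := by
        intro z
        calc (x^K * y^K) * z = x^K * (y^K * z) := mul_assoc _ _ _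
        _ = x^K * (z * y^K) := by rw [hcomf z]
        _ = (x^K * z) * y^K := (mul_assoc _ _ _).symm
        _ = (z * x^K) * y^K := by rw [hcome z]
        _ = z * (x^K * y^K) := mul_assoc _ _ _
      have hc : Commute (x^K * y^K) (x*y) := hcef (x*y)
      rw [hc.mul_pow, hidempow _ hefid K] at h2
      exact h2
    have hT1 : (x*y)^(K+1) = g * x * y := by rw [pow_succ, ← mul_assoc]
    have hT2 : (x*y)^(K+1) = x * (y * g) := by rw [pow_succ', mul_assoc]
    have hi : x^K * (x*y)^(K+1) = (x*y)^(K+1) := by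
      calc x^K * (x*y)^(K+1) = x^K * (g * x * y) := by rw [hT1]
      _ = ((x^K * g) * x) * y := by rw [← mul_assoc, ← mul_assoc]
      _ = ((g * x^K) * x) * y := by rw [hcome g]
      _ = (g * (x^K * x)) * y := by rw [mul_assoc g]
      _ = (g * x^(K+1)) * y := by rw [← pow_succ]
      _ = (g * x) * y := by rw [hb]
      _ = (x*y)^(K+1) := hT1.symm
    have hj : y^K * (x*y)^(K+1) = (x*y)^(K+1) := by
      calc y^K * (x*y)^(K+1) = y^K * (x * (y * g)) := by rw [hT2]
      _ = (y^K * x) * (y * g) := (mul_assoc _ _ _).symm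
      _ = (x * y^K) * (y * g) := by rw [hcomf x]
      _ = x * (y^K * (y * g)) := mul_assoc _ _ _
      _ = x * ((y^K * y) * g) := by rw [← mul_assoc (y^K)]
      _ = x * (y^(K+1) * g) := by rw [← pow_succ]
      _ = x * (y * g) := by rw [hcY]
      _ = (x*y)^(K+1) := hT2.symm
    calc (x*y)^(K+1) = x^K * (x*y)^(K+1) := hi.symm
    _ = x^K * (y^K * (x*y)^(K+1)) := by rw [hj]
    _ = (x^K * y^K) * (x*y)^(K+1) := (mul_assoc _ _ _).symm
    _ = (x^K * y^K) * (x*y) := ha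
    _ = x^K * (y^K * (x * y)) := mul_assoc _ _ _
    _ = x^K * ((y^K * x) * y) := by rw [← mul_assoc (y^K)]
    _ = x^K * ((x * y^K) * y) := by rw [hcomf x]
    _ = x^K * (x * (y^K * y)) := by rw [mul_assoc x]
    _ = (x^K * x) * (y^K * y) := (mul_assoc _ _ _).symm
    _ = x^(K+1) * y^(K+1) := by rw [← pow_succ, ← pow_succ]
  -- absorption: q = q * u implies q regular
  have habs : ∀ q u : S, q = q * u → q ∈ Reg := by
    intro q u h
    have hqu : (q : WithOne S) = (q : WithOne S) * (u : WithOne S) := by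
      rw [← WithOne.coe_mul, ← h]
    have hr : ∀ r : ℕ, (q : WithOne S) = (q : WithOne S) * (u : WithOne S) ^ r := by
      intro r
      induction r with
      | zero => simp
      | succ n ih => rw [pow_succ, ← mul_assoc, ← ih, ← hqu]
    have hq : q * spow u K = q := by
      apply WithOne.coe_inj.mp
      rw [WithOne.coe_mul, hE]
      exact (hr K).symm
    apply hreg (spow u K) q (hidemS u)
    rw [hcen (spow u K) q (hidemS u)]
    exact hq
  -- long products are regular
  have hlong : ∀ (l : List S) (q : S), Nat.card S + 1 ≤ l.length → sgProd q l ∈ Reg := by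
    intro l q hlen
    letI : Fintype S := Fintype.ofFinite S
    have hcard : Fintype.card S < l.length + 1 := by
      rw [← Nat.card_eq_fintype_card]; omega
    obtain ⟨i, j, hij, hPij⟩ := Fintype.exists_ne_map_eq_of_card_lt
      (fun i : Fin (l.length + 1) => sgProd q (l.take i)) (by simpa using hcard)
    have key : ∀ i j : Fin (l.length + 1), (i : ℕ) < (j : ℕ) →
        sgProd q (l.take i) = sgProd q (l.take j) → sgProd q l ∈ Reg := by
      intro i j hlt hPeq
      set q0 := sgProd q (l.take (i : ℕ)) with hq0def
      set seg := (l.take (j : ℕ)).drop (i : ℕ) with hsegdef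
      have htt : (l.take (j : ℕ)).take (i : ℕ) = l.take (i : ℕ) := by
        rw [List.take_take]
        congr 1
        omega
      have hsplit : l.take (j : ℕ) = l.take (i : ℕ) ++ seg := by
        have h := (List.take_append_drop (i : ℕ) (l.take (j : ℕ))).symm
        rw [htt] at h
        exact h
      have hjlen : (j : ℕ) ≤ l.length := by omega
      have hseglen : seg ≠ [] := by
        have h1 : seg.length = (j : ℕ) - (i : ℕ) := by
          rw [hsegdef, List.length_drop, List.length_take]
          omega
        intro hnil
        rw [hnil] at h1
        simp at h1
        omega
      obtain ⟨c, tl, hct⟩ := List.exists_cons_of_ne_nil hseglen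
      have hq0 : q0 = q0 * sgProd c tl := by
        have h1 : sgProd q (l.take (j : ℕ)) = List.foldl (· * ·) q0 seg := by
          rw [hq0def]
          show List.foldl (· * ·) q (l.take (j : ℕ)) = _
          rw [hsplit, List.foldl_append]
          rfl
        rw [hct] at h1
        have h2 : List.foldl (· * ·) q0 (c :: tl) = q0 * List.foldl (· * ·) c tl := by
          show List.foldl (· * ·) (q0 * c) tl = _
          exact List.foldl_assoc
        calc q0 = sgProd q (l.take (j : ℕ)) := hPeq
        _ = q0 * sgProd c tl := by rw [h1, h2]; rfl
      have hq0reg : q0 ∈ Reg := habs q0 _ hq0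
      have hfull : sgProd q l = List.foldl (· * ·) q0 (l.drop (i : ℕ)) := by
        show List.foldl (· * ·) q l = _
        conv_lhs => rw [show l = l.take (i : ℕ) ++ l.drop (i : ℕ) from (List.take_append_drop _ l).symm]
        rw [List.foldl_append]
        rfl
      cases hd : l.drop (i : ℕ) with
      | nil => rw [hfull, hd]; exact hq0reg
      | cons c' tl' =>
        rw [hfull, hd]
        have h2 : List.foldl (· * ·) q0 (c' :: tl') = q0 * List.foldl (· * ·) c' tl' := by
          show List.foldl (· * ·) (q0 * c') tl' = _
          exact List.foldl_assoc
        rw [h2]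
        exact (hidl q0 hq0reg _).1
    rcases Nat.lt_or_ge (i : ℕ) (j : ℕ) with h | h
    · exact key i j h hPij
    · have hlt : (j : ℕ) < (i : ℕ) := by
        rcases Nat.lt_or_ge (j : ℕ) (i : ℕ) with h' | h'
        · exact h'
        · exfalso; exact hij (Fin.ext (by omega))
      exact key j i hlt hPij.symm
  -- regular powers
  have hspowreg : ∀ b : S, b ∈ Reg → ∀ j : ℕ, spow b (j+1) ∈ Reg := by
    intro b hb j
    induction j with
    | zero => exact hb
    | succ n ih => exact (hidl _ ih b).1
  -- the Clifford component (subtype)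
  letI iMulC : Mul {b : S // b ∈ Reg} := ⟨fun a b => ⟨a.1 * b.1, (hidl a.1 a.2 b.1).1⟩⟩
  letI iCsub : Semigroup {b : S // b ∈ Reg} :=
    { mul_assoc := fun a b c => Subtype.ext (mul_assoc _ _ _) }
  have hcliff : IsCliffordSG {b : S // b ∈ Reg} := by
    refine ⟨fun _ _ _ _ => trivial, ?_, ?_⟩
    · rintro ⟨b, hb⟩ -
      have hbe : ((b : S) : WithOne S) ^ (K+1) = (b : WithOne S) := hb
      set P : ℕ → {c : S // c ∈ Reg} := fun j => ⟨spow b (j+1), hspowreg b hb j⟩ with hPdef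
      have hPmul : ∀ j1 j2, P j1 * P j2 = P (j1 + j2 + 1) := by
        intro j1 j2
        apply Subtype.ext
        apply WithOne.coe_inj.mp
        show ((spow b (j1+1) * spow b (j2+1) : S) : WithOne S) = ((spow b (j1+j2+1+1) : S) : WithOne S)
        rw [WithOne.coe_mul, coe_spow b (j1+1) (by omega), coe_spow b (j2+1) (by omega),
          coe_spow b (j1+j2+1+1) (by omega), ← pow_add]
        congr 1
        omega
      have hPeq2 : ∀ i1 i2 : ℕ, (b : WithOne S) ^ (i1+1) = (b : WithOne S) ^ (i2+1) → P i1 = P i2 := by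
        intro i1 i2 h
        apply Subtype.ext
        apply WithOne.coe_inj.mp
        show ((spow b (i1+1) : S) : WithOne S) = ((spow b (i2+1) : S) : WithOne S)
        rw [coe_spow b (i1+1) (by omega), coe_spow b (i2+1) (by omega)]
        exact h
      have hperm : ∀ r c : ℕ, (b : WithOne S) ^ (r + 1 + c * K) = (b : WithOne S) ^ (r + 1) := by
        intro r c
        induction c with
        | zero => simp
        | succ n ih =>
          calc (b : WithOne S) ^ (r+1+(n+1)*K)
              = (b : WithOne S) ^ (r + n*K) * (b : WithOne S) ^ (K+1) := by
                rw [← pow_add]; congr 1; ring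
          _ = (b : WithOne S) ^ (r + n*K) * (b : WithOne S) := by rw [hbe]
          _ = (b : WithOne S) ^ (r + n*K + 1) := (pow_succ _ _).symm
          _ = (b : WithOne S) ^ (r + 1 + n*K) := by congr 1; omega
          _ = (b : WithOne S) ^ (r+1) := ih
      refine ⟨Set.range P, Set.subset_univ _, ⟨?_, P (K-1), ⟨K-1, rfl⟩, ?_, ?_⟩, ⟨0, Subtype.ext rfl⟩⟩
      · rintro - ⟨j1, rfl⟩ - ⟨j2, rfl⟩
        exact ⟨j1 + j2 + 1, (hPmul j1 j2).symm⟩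
      · rintro - ⟨j, rfl⟩
        constructor
        · rw [hPmul]
          apply hPeq2
          have h := hperm j 1
          calc (b : WithOne S) ^ (K-1+j+1+1) = (b : WithOne S) ^ (j+1+1*K) := by congr 1; omega
          _ = (b : WithOne S) ^ (j+1) := h
        · rw [hPmul]
          apply hPeq2
          have h := hperm j 1
          calc (b : WithOne S) ^ (j+(K-1)+1+1) = (b : WithOne S) ^ (j+1+1*K) := by congr 1; omega
          _ = (b : WithOne S) ^ (j+1) := h
      · rintro - ⟨j, rfl⟩
        refine ⟨P ((j+2)*K - (j+1) - 1), ⟨_, rfl⟩, ?_, ?_⟩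
        · rw [hPmul]
          apply hPeq2
          have hge : j + 2 ≤ (j+2)*K := Nat.le_mul_of_pos_right _ (by omega)
          have hq2 : j + ((j+2)*K - (j+1) - 1) + 1 + 1 = (j+2)*K := by omega
          rw [hq2, show K - 1 + 1 = K from by omega]
          have h := hperm (K-1) (j+1)
          rw [show K - 1 + 1 = K from by omega] at h
          calc (b : WithOne S) ^ ((j+2)*K) = (b : WithOne S) ^ (K + (j+1)*K) := by congr 1; ring
          _ = (b : WithOne S) ^ K := h
        · rw [hPmul]
          apply hPeq2
          have hge : j + 2 ≤ (j+2)*K := Nat.le_mul_of_pos_right _ (by omega)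
          have hq2 : ((j+2)*K - (j+1) - 1) + j + 1 + 1 = (j+2)*K := by omega
          rw [hq2, show K - 1 + 1 = K from by omega]
          have h := hperm (K-1) (j+1)
          rw [show K - 1 + 1 = K from by omega] at h
          calc (b : WithOne S) ^ ((j+2)*K) = (b : WithOne S) ^ (K + (j+1)*K) := by congr 1; ring
          _ = (b : WithOne S) ^ K := h
    · rintro ⟨e, heR⟩ - hee ⟨u, huR⟩ -
      apply Subtype.ext
      have he : e * e = e := congrArg Subtype.val hee
      exact hcen e u he
  have hCfin : Finite {b : S // b ∈ Reg} := Subtype.finite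
  -- the nilpotent component (Rees quotient by Reg)
  letI sd : Setoid S :=
    ⟨fun a b => a = b ∨ (a ∈ Reg ∧ b ∈ Reg),
      ⟨fun a => Or.inl rfl,
        fun h => by rcases h with h | h; exact Or.inl h.symm; exact Or.inr ⟨h.2, h.1⟩,
        fun h1 h2 => by
          rcases h1 with h1 | h1
          · rcases h2 with h2 | h2
            · exact Or.inl (h1.trans h2)
            · exact Or.inr ⟨h1 ▸ h2.1, h2.2⟩
          · rcases h2 with h2 | h2
            · exact Or.inr ⟨h1.1, h2 ▸ h1.2⟩
            · exact Or.inr ⟨h1.1, h2.2⟩⟩⟩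
  have hcompat : ∀ (a₁ b₁ a₂ b₂ : S), sd.r a₁ a₂ → sd.r b₁ b₂ →
      Quotient.mk sd (a₁ * b₁) = Quotient.mk sd (a₂ * b₂) := by
    intro a₁ b₁ a₂ b₂ h1 h2
    rcases h1 with h1 | h1
    · rcases h2 with h2 | h2
      · rw [h1, h2]
      · exact Quotient.sound (Or.inr ⟨(hidl b₁ h2.1 a₁).2, (hidl b₂ h2.2 a₂).2⟩)
    · exact Quotient.sound (Or.inr ⟨(hidl a₁ h1.1 b₁).1, (hidl a₂ h1.2 b₂).1⟩)
  letI iMulN : Mul (Quotient sd) :=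
    ⟨Quotient.lift₂ (fun a b => Quotient.mk sd (a * b))
      (fun a₁ b₁ a₂ b₂ h1 h2 => hcompat a₁ b₁ a₂ b₂ h1 h2)⟩
  letI iNsub : Semigroup (Quotient sd) :=
    { mul_assoc := by
        intro a b c
        refine Quotient.inductionOn₃ a b c fun a b c => ?_
        exact congrArg (Quotient.mk sd) (mul_assoc a b c) }
  have hNfin : Finite (Quotient sd) := Quotient.finite sd
  have hmkhom : ∀ u v : S, Quotient.mk sd (u * v) = Quotient.mk sd u * Quotient.mk sd v :=
    fun u v => rfl
  have hNnil : IsNilpotentSG (Quotient sd) := by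
    refine ⟨Nat.card S + 2, fun a b l l' hl hl' => ?_⟩
    have hout : ∀ (c : Quotient sd) (L : List (Quotient sd)),
        sgProd c L = Quotient.mk sd (sgProd c.out (L.map Quotient.out)) := by
      intro c L
      have hmap : (L.map Quotient.out).map (Quotient.mk sd) = L := by
        rw [List.map_map]
        have : (Quotient.mk sd) ∘ (Quotient.out : Quotient sd → S) = id :=
          funext fun q => Quotient.out_eq q
        rw [this, List.map_id]
      calc sgProd c L = sgProd (Quotient.mk sd c.out) ((L.map Quotient.out).map (Quotient.mk sd)) := by
            rw [Quotient.out_eq, hmap]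
      _ = Quotient.mk sd (sgProd c.out (L.map Quotient.out)) :=
            sgProd_map (Quotient.mk sd) (fun u v => hmkhom u v) _ _
    rw [hout a l, hout b l']
    apply Quotient.sound
    refine Or.inr ⟨hlong _ _ ?_, hlong _ _ ?_⟩
    · rw [List.length_map]; omega
    · rw [List.length_map]; omega
  -- shrink to Type 0
  obtain ⟨C0, iC0, hC, hC0fin, hCbij, hChom⟩ := shrink {b : S // b ∈ Reg}
  obtain ⟨N0, iN0, hN, hN0fin, hNbij, hNhom⟩ := shrink (Quotient sd)
  refine ⟨C0, N0, iC0, iN0,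
    fun u => (hC ⟨spow u (K+1), hphiReg u⟩, hN (Quotient.mk sd u)),
    hC0fin, hN0fin,
    clifford_transfer hC hCbij hChom hcliff,
    nilpotent_transfer hN hNbij hNhom hNnil, ?_, ?_⟩
  · intro u v huv
    have h1 : (⟨spow u (K+1), hphiReg u⟩ : {b : S // b ∈ Reg}) = ⟨spow v (K+1), hphiReg v⟩ :=
      hCbij.1 (congrArg Prod.fst huv)
    have h2 : Quotient.mk sd u = Quotient.mk sd v := hNbij.1 (congrArg Prod.snd huv)
    have h1' : spow u (K+1) = spow v (K+1) := congrArg Subtype.val h1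
    rcases Quotient.exact h2 with h | h
    · exact h
    · -- both regular: u = spow u (K+1)
      have hu : u = spow u (K+1) := by
        apply WithOne.coe_inj.mp
        rw [coe_spow u (K+1) (by omega)]
        exact h.1.symm
      have hv : v = spow v (K+1) := by
        apply WithOne.coe_inj.mp
        rw [coe_spow v (K+1) (by omega)]
        exact h.2.symm
      rw [hu, hv, h1']
  · intro u v
    have hCeq : hC ⟨spow (u*v) (K+1), hphiReg (u*v)⟩
        = hC ⟨spow u (K+1), hphiReg u⟩ * hC ⟨spow v (K+1), hphiReg v⟩ := by
      rw [← hChom]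
      congr 1
      exact Subtype.ext (hphiHom u v)
    have hNeq : hN (Quotient.mk sd (u*v)) = hN (Quotient.mk sd u) * hN (Quotient.mk sd v) := by
      rw [← hNhom, hmkhom]
    exact Prod.ext hCeq hNeq
end

section
/- Let S be a finite semigroup in which all idempotents are central and such that for every idempotent e ∈ S and every a ∈ S with ea = a, the subsemigroup ⟨a⟩ generated by a is a group. Let k ≥ 1 be such that x^k is idempotent for every x ∈ S. Then: (i) for every idempotent e ∈ S and every x ∈ S, ex = e·x^{k+1}; (ii) the map α : S → S, x ↦ x^{k+1}, is a semigroup homomorphism; (iii) α∘α = α, i.e., (x^{k+1})^{k+1} = x^{k+1} for all x ∈ S. -/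
section Aux
variable {S : Type*} [Semigroup S]

lemma spow_one' (a : S) : spow a 1 = a := rfl

lemma spow_succ' (a : S) {n : ℕ} (hn : 1 ≤ n) : spow a (n + 1) = spow a n * a := by
  cases n with
  | zero => omega
  | succ m => rfl

lemma spow_add' (a : S) {m n : ℕ} (hm : 1 ≤ m) (hn : 1 ≤ n) :
    spow a (m + n) = spow a m * spow a n := by
  induction n with
  | zero => omega
  | succ n ih =>
    rcases Nat.lt_or_ge n 1 with h | h
    · have : n = 0 := by omega
      subst this
      exact spow_succ' a hm
    · rw [show m + (n + 1) = (m + n) + 1 from rfl, spow_succ' a (by omega),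
        ih h, spow_succ' a h, mul_assoc]

lemma spow_mul' (a : S) {m n : ℕ} (hm : 1 ≤ m) (hn : 1 ≤ n) :
    spow a (m * n) = spow (spow a m) n := by
  induction n with
  | zero => omega
  | succ n ih =>
    rcases Nat.lt_or_ge n 1 with h | h
    · have : n = 0 := by omega
      subst this
      rw [Nat.mul_one]
      rfl
    · rw [show m * (n + 1) = m * n + m from by ring,
        spow_add' a (Nat.mul_pos (by omega) h) hm, ih h, spow_succ' _ h]

lemma spow_idem' {e : S} (he : e * e = e) {n : ℕ} (hn : 1 ≤ n) : spow e n = e := by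
  induction n with
  | zero => omega
  | succ n ih =>
    rcases Nat.lt_or_ge n 1 with h | h
    · have : n = 0 := by omega
      subst this; rfl
    · rw [spow_succ' e h, ih h, he]

lemma central_idem_mul {e : S} (he : e * e = e) (hc : ∀ s : S, e * s = s * e)
    (a b : S) : (e * a) * (e * b) = e * (a * b) := by
  calc (e * a) * (e * b) = e * ((a * e) * b) := by rw [mul_assoc, mul_assoc]
    _ = e * ((e * a) * b) := by rw [hc a]
    _ = (e * e) * (a * b) := by rw [mul_assoc, ← mul_assoc, ← mul_assoc]
    _ = e * (a * b) := by rw [he]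

lemma spow_central {e : S} (he : e * e = e) (hc : ∀ s : S, e * s = s * e)
    (x : S) {n : ℕ} (hn : 1 ≤ n) : spow (e * x) n = e * spow x n := by
  induction n with
  | zero => omega
  | succ n ih =>
    rcases Nat.lt_or_ge n 1 with h | h
    · have : n = 0 := by omega
      subst this; rfl
    · rw [spow_succ' _ h, spow_succ' x h, ih h, central_idem_mul he hc]

/-- If some idempotent fixes `a` on the left, and `spow · k` is idempotent,
then `a = a^(k+1)`. -/
lemma fix_pow {S : Type*} [Semigroup S]
    (hgrp : ∀ e a : S, e * e = e → e * a = a → ∃ m, 2 ≤ m ∧ a = spow a m)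
    {k : ℕ} (hk : 1 ≤ k) (hik : ∀ x : S, spow x k * spow x k = spow x k)
    {e a : S} (he : e * e = e) (hea : e * a = a) :
    a = spow a (k + 1) := by
  obtain ⟨m, hm, ham⟩ := hgrp e a he hea
  have step1 : a = a * spow a (m - 1) := by
    calc a = spow a m := ham
      _ = spow a (1 + (m - 1)) := by congr 1; omega
      _ = spow a 1 * spow a (m - 1) := spow_add' a le_rfl (by omega)
      _ = a * spow a (m - 1) := rfl
  have key : ∀ j, 1 ≤ j → a = a * spow a (j * (m - 1)) := by
    intro j hj
    induction j with
    | zero => omega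
    | succ j ih =>
      rcases Nat.lt_or_ge j 1 with h | h
      · have : j = 0 := by omega
        subst this
        simpa using step1
      · calc a = a * spow a (j * (m - 1)) := ih h
          _ = (a * spow a (m - 1)) * spow a (j * (m - 1)) := by rw [← step1]
          _ = a * (spow a (m - 1) * spow a (j * (m - 1))) := mul_assoc _ _ _
          _ = a * spow a ((m - 1) + j * (m - 1)) := by
              rw [spow_add' a (by omega) (Nat.mul_pos h (by omega))]
          _ = a * spow a ((j + 1) * (m - 1)) := by congr 2; ring
  calc a = a * spow a (k * (m - 1)) := key k hk
    _ = a * spow (spow a k) (m - 1) := by rw [spow_mul' a hk (by omega)]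
    _ = a * spow a k := by rw [spow_idem' (hik a) (by omega)]
    _ = spow a 1 * spow a k := rfl
    _ = spow a (1 + k) := (spow_add' a le_rfl hk).symm
    _ = spow a (k + 1) := by rw [Nat.add_comm]

end Aux
/-- In a finite semigroup with central idempotents where `e * a = a`
(`e` idempotent) forces `⟨a⟩` to be a group, if `x ^ k` is idempotent for all
`x` (`k ≥ 1`), then (i) `e * x = e * x ^ (k+1)` for every idempotent `e`,
(ii) `x ↦ x ^ (k+1)` is a homomorphism, and (iii) `(x ^ (k+1)) ^ (k+1) = x ^ (k+1)`. -/
theorem stmt4 {S : Type*} [Semigroup S] [Finite S] [Nonempty S]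
    (hcen : ∀ e s : S, e * e = e → e * s = s * e)
    (hgrp : ∀ e a : S, e * e = e → e * a = a → ∃ m, 2 ≤ m ∧ a = spow a m)
    (k : ℕ) (hk : 1 ≤ k) (hik : ∀ x : S, spow x k * spow x k = spow x k) :
    (∀ e x : S, e * e = e → e * x = e * spow x (k + 1)) ∧
    (∀ x y : S, spow (x * y) (k + 1) = spow x (k + 1) * spow y (k + 1)) ∧
    (∀ x : S, spow (spow x (k + 1)) (k + 1) = spow x (k + 1)) := by
  -- absorption: x^k * x^(k+1) = x^(k+1)
  have habs : ∀ x : S, spow x k * spow x (k + 1) = spow x (k + 1) := by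
    intro x
    rw [spow_succ' x hk, ← mul_assoc, hik]
  -- (i)
  have hI : ∀ e x : S, e * e = e → e * x = e * spow x (k + 1) := by
    intro e x he
    have hfix : e * x = spow (e * x) (k + 1) :=
      fix_pow hgrp hk hik he (by rw [← mul_assoc, he])
    rw [hfix, spow_central he (fun s => hcen e s he) x (by omega)]
  refine ⟨hI, ?_, ?_⟩
  · -- (ii)
    intro x y
    have he : spow x k * spow x k = spow x k := hik x
    have hg : spow (x * y) k * spow (x * y) k = spow (x * y) k := hik (x * y)
    have hce : ∀ s : S, spow x k * s = s * spow x k := fun s => hcen _ s he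
    -- A : x^(k+1) * y^(k+1) = x^(k+1) * y
    have hA : spow x (k + 1) * spow y (k + 1) = spow x (k + 1) * y := by
      have h1 : spow x (k + 1) = x * spow x k := by
        rw [show k + 1 = 1 + k from Nat.add_comm _ _, spow_add' x le_rfl hk, spow_one']
      rw [h1, mul_assoc, mul_assoc, ← hI _ y he]
    -- c := x^(k+1) * y, fixed by the idempotent x^k
    have hec : spow x k * (spow x (k + 1) * y) = spow x (k + 1) * y := by
      rw [← mul_assoc, habs x]
    have hcfix : spow x (k + 1) * y = spow (spow x (k + 1) * y) (k + 1) :=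
      fix_pow hgrp hk hik he hec
    have hc1 : spow x (k + 1) * y = spow x k * (x * y) := by
      rw [spow_succ' x hk, mul_assoc]
    have hD : spow (spow x (k + 1) * y) (k + 1) = spow x k * spow (x * y) (k + 1) := by
      rw [hc1, spow_central he hce (x * y) (by omega)]
    have hB : spow (x * y) (k + 1) = spow (x * y) k * (spow x (k + 1) * y) := by
      rw [spow_succ' (x * y) hk, ← mul_assoc, hI _ x hg, mul_assoc]
    have hgc : spow x (k + 1) * y = spow (x * y) k * (spow x (k + 1) * y) := by
      calc spow x (k + 1) * y = spow (spow x (k + 1) * y) (k + 1) := hcfix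
        _ = spow x k * spow (x * y) (k + 1) := hD
        _ = spow x k * (spow (x * y) k * (spow x (k + 1) * y)) := by rw [hB]
        _ = (spow x k * spow (x * y) k) * (spow x (k + 1) * y) := (mul_assoc _ _ _).symm
        _ = (spow (x * y) k * spow x k) * (spow x (k + 1) * y) := by rw [hce]
        _ = spow (x * y) k * (spow x k * (spow x (k + 1) * y)) := mul_assoc _ _ _
        _ = spow (x * y) k * (spow x (k + 1) * y) := by rw [hec]
    calc spow (x * y) (k + 1) = spow (x * y) k * (spow x (k + 1) * y) := hB
      _ = spow x (k + 1) * y := hgc.symm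
      _ = spow x (k + 1) * spow y (k + 1) := hA.symm
  · -- (iii)
    intro x
    exact (fix_pow hgrp hk hik (hik x) (habs x)).symm
end

section
/- Let S be a finite Clifford semigroup, n ∈ ℕ, and a_1, …, a_k, b ∈ S^n such that b(i) ≤ a_j(i) for all i ∈ {1,…,n} and j ∈ {1,…,k}, where ≤ is the Clifford preorder on S. Let e ∈ S^n be defined by e(i) := the idempotent power of b(i). If for every i ∈ {1,…,n} the element e(i) lies in the subsemigroup of S generated by {a_1(i), …, a_k(i)}, then e lies in the subsemigroup of S^n generated by {a_1, …, a_k}. -/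
/-!
Fix a coordinate `i` and write `e = e_{b(i)}`, a central idempotent. Since `b(i) ≤ a_j(i)`, the
element `e` is a multiple of a power of `a_j(i)`, so every `a_j(i)`, and then every `x` in the
subsemigroup they generate, has a left inverse modulo `e` (`e * (y * x) = e`). Hence if `e * x`
is idempotent it equals `e`.

Lifting each `e_{b(i)}` to an element of `⟨a₁, …, a_k⟩` equal to it in coordinate `i` and
multiplying these lifts gives `p ∈ ⟨a₁, …, a_k⟩` with `e * p = p`, where `e = (e_{b(i)})_i`.
The elements `q ∈ ⟨a₁, …, a_k⟩` with `e * q = q` form a finite nonempty semigroup, so one of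
them, `f`, is idempotent; in each coordinate `f i = e i * f i` is idempotent, hence equals `e i`.
-/

section LeftInvertibleAt

variable {S : Type*} [Semigroup S]

/-- For a central idempotent `e`, this says that `e * x` is left invertible in the monoid `e * S`
with identity `e`. -/
def IsLeftInvertibleAt (e x : S) : Prop :=
  ∃ y, e * (y * x) = e

theorem IsLeftInvertibleAt.mul {e x x' : S} (hcomm : ∀ s, e * s = s * e)
    (hx : IsLeftInvertibleAt e x) (hx' : IsLeftInvertibleAt e x') :
    IsLeftInvertibleAt e (x * x') := by
  obtain ⟨y, hy⟩ := hx
  obtain ⟨y', hy'⟩ := hx'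
  refine ⟨y' * y, ?_⟩
  calc e * (y' * y * (x * x')) = e * y' * (y * x) * x' := by simp only [mul_assoc]
    _ = y' * (e * (y * x)) * x' := by rw [hcomm y']; simp only [mul_assoc]
    _ = e * (y' * x') := by rw [hy, ← hcomm y', mul_assoc]
    _ = e := hy'

theorem isLeftInvertibleAt_of_mul_spow_eq {e a : S} {m : ℕ} (h : e * spow a m = e) :
    IsLeftInvertibleAt e a := by
  match m, h with
  | 0, (h : e * a = e) | 1, (h : e * a = e) => exact ⟨a, by rw [← mul_assoc, h, h]⟩
  | k + 2, h => exact ⟨spow a (k + 1), h⟩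

theorem IsLeftInvertibleAt.of_mem_closure {e : S} (hcomm : ∀ s, e * s = s * e) {A : Set S}
    (hA : ∀ a ∈ A, IsLeftInvertibleAt e a) {x : S} (hx : x ∈ Subsemigroup.closure A) :
    IsLeftInvertibleAt e x := by
  induction hx using Subsemigroup.closure_induction with
  | mem a ha => exact hA a ha
  | mul x x' _ _ hx hx' => exact hx.mul hcomm hx'

theorem IsLeftInvertibleAt.mul_eq_of_isIdempotentElem {e x : S} (hcomm : ∀ s, e * s = s * e)
    (he : IsIdempotentElem e) (hx : IsLeftInvertibleAt e x) (hex : IsIdempotentElem (e * x)) :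
    e * x = e := by
  obtain ⟨y, hy⟩ := hx
  have hyex : y * (e * x) = e := by rw [← mul_assoc, ← hcomm y, mul_assoc, hy]
  calc e * x = y * (e * x) * (e * x) := by rw [hyex, ← mul_assoc, he.eq]
    _ = e := by rw [mul_assoc, hex.eq, hyex]

end LeftInvertibleAt

theorem Subsemigroup.exists_isIdempotentElem {S : Type*} [Semigroup S] [Finite S]
    (T : Subsemigroup S) (hT : (T : Set S).Nonempty) : ∃ f ∈ T, IsIdempotentElem f := by
  let _ : TopologicalSpace S := ⊥
  have : DiscreteTopology S := ⟨rfl⟩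
  exact exists_idempotent_in_compact_subsemigroup (fun _ => continuous_of_discreteTopology)
    (T : Set S) hT (Set.toFinite _).isCompact fun _ hx _ hy => T.mul_mem hx hy

def Subsemigroup.leftFixed {T : Type*} [Semigroup T] (e : T) : Subsemigroup T where
  carrier := {x | e * x = x}
  mul_mem' {x y} hx hy := by
    change e * (x * y) = x * y
    rw [← mul_assoc, (hx : e * x = x)]

section Pi

variable {S ι κ : Type*} [Semigroup S]

theorem Subsemigroup.mem_closure_range_apply_iff {a : κ → ι → S} {i : ι} {y : S} :
    y ∈ closure (Set.range fun j => a j i) ↔ ∃ x ∈ closure (Set.range a), x i = y := by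
  have hmap : (closure (Set.range a)).map (Pi.evalMulHom (fun _ => S) i) =
      closure (Set.range fun j => a j i) := by
    rw [MulHom.map_mclosure, ← Set.range_comp]
    rfl
  rw [← hmap, mem_map]
  rfl

theorem Subsemigroup.exists_mem_mul_eq_self_of_forall_apply [Fintype ι] [Nonempty ι]
    (M : Subsemigroup (ι → S)) {e : ι → S} (hcomm : ∀ i s, e i * s = s * e i)
    (h : ∀ i, ∃ w ∈ M, e i * w i = w i) : ∃ p ∈ M, e * p = p := by
  classical
  choose w hwM hwe using h
  obtain ⟨i₀⟩ := ‹Nonempty ι›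
  suffices ∀ s : Finset ι, ∃ p ∈ M, ∀ i ∈ s, e i * p i = p i by
    obtain ⟨p, hpM, hp⟩ := this Finset.univ
    exact ⟨p, hpM, funext fun i => hp i (Finset.mem_univ i)⟩
  intro s
  induction s using Finset.induction_on with
  | empty => exact ⟨w i₀, hwM i₀, by simp⟩
  | insert i s _ ih =>
    obtain ⟨p, hpM, hp⟩ := ih
    refine ⟨p * w i, M.mul_mem hpM (hwM i), ?_⟩
    simp only [Finset.mem_insert, forall_eq_or_imp, Pi.mul_apply]
    refine ⟨?_, fun j hj => by rw [← mul_assoc, hp j hj]⟩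
    rw [← mul_assoc, hcomm i, mul_assoc, hwe i]

end Pi

theorem stmt12_general {S : Type*} [Semigroup S] [Finite S]
    (hCl : IsCliffordSG S) (E : S → S)
    (hE : ∀ z : S, (∃ m, 1 ≤ m ∧ E z = spow z m) ∧ E z * E z = E z)
    (n k : ℕ) (hn : 0 < n) (a : Fin k → Fin n → S) (b : Fin n → S)
    (hba : ∀ (j : Fin k) (i : Fin n), E (b i) * E (a j i) = E (b i))
    (he : ∀ i : Fin n, E (b i) ∈ Subsemigroup.closure (Set.range fun j => a j i)) :
    (fun i => E (b i)) ∈ Subsemigroup.closure (Set.range a) := by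
  set e : Fin n → S := fun i => E (b i)
  have hidem (i : Fin n) : IsIdempotentElem (e i) := (hE (b i)).2
  have hcomm (i : Fin n) (s : S) : e i * s = s * e i :=
    hCl.2.2 _ (Set.mem_univ _) (hidem i) s (Set.mem_univ _)
  set M := Subsemigroup.closure (Set.range a)
  have : NeZero n := ⟨hn.ne'⟩
  obtain ⟨p, hpM, hp⟩ := M.exists_mem_mul_eq_self_of_forall_apply hcomm fun i => by
      obtain ⟨w, hwM, hw⟩ := Subsemigroup.mem_closure_range_apply_iff.1 (he i)
      exact ⟨w, hwM, by rw [hw]; exact hidem i⟩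
  obtain ⟨f, ⟨hfM, hfe⟩, hf⟩ :=
    (M ⊓ Subsemigroup.leftFixed e).exists_isIdempotentElem ⟨p, hpM, hp⟩
  suffices f = e from this ▸ hfM
  funext i
  have hfe_i : e i * f i = f i := congrFun (hfe : e * f = f) i
  have hinv : IsLeftInvertibleAt (e i) (f i) := by
    have hf_i : f i ∈ Subsemigroup.closure (Set.range fun j => a j i) :=
      Subsemigroup.mem_closure_range_apply_iff.2 ⟨f, hfM, rfl⟩
    refine .of_mem_closure (hcomm i) ?_ hf_i
    rintro _ ⟨j, rfl⟩
    obtain ⟨⟨m, -, hm⟩, -⟩ := hE (a j i)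
    exact isLeftInvertibleAt_of_mul_spow_eq (hm ▸ hba j i)
  rw [← hinv.mul_eq_of_isIdempotentElem (hcomm i) (hidem i) (by rw [hfe_i]; exact congrFun hf i),
    hfe_i]

/-- For a finite Clifford semigroup `S` and `a₁, …, a_k, b ∈ Sⁿ`
(`n ≥ 1`) with `b i ≤ a j i` for all `i, j` (Clifford preorder), if the tuple
`e` of idempotent powers of the coordinates of `b` satisfies
`e i ∈ ⟨a₁ i, …, a_k i⟩` for every `i`, then `e ∈ ⟨a₁, …, a_k⟩`. -/
theorem stmt12 {S : Type*} [Semigroup S] [Finite S] [Nonempty S]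
    (hCl : IsCliffordSG S) (E : S → S)
    (hE : ∀ z : S, (∃ m, 1 ≤ m ∧ E z = spow z m) ∧ E z * E z = E z)
    (n k : ℕ) (hn : 0 < n) (a : Fin k → Fin n → S) (b : Fin n → S)
    (hba : ∀ (j : Fin k) (i : Fin n), E (b i) * E (a j i) = E (b i))
    (he : ∀ i : Fin n, E (b i) ∈ Subsemigroup.closure (Set.range fun j => a j i)) :
    (fun i => E (b i)) ∈ Subsemigroup.closure (Set.range a) :=
  stmt12_general hCl E hE n k hn a b hba he
end

section
/- Let S be a finite Clifford semigroup, n ∈ ℕ, and a_1, …, a_k, b ∈ S^n such that b(i) ≤ a_j(i) for all i ∈ {1,…,n} and j ∈ {1,…,k}, where ≤ is the Clifford preorder on S. Let e ∈ S^n be defined by e(i) := the idempotent power of b(i), and assume that for every i ∈ {1,…,n} the element e(i) lies in the subsemigroup of S generated by {a_1(i), …, a_k(i)}. Then b lies in the subsemigroup of S^n generated by {a_1, …, a_k} if and only if b lies in the subsemigroup of S^n generated by {a_1e, …, a_ke}. -/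
section MyAux
variable {S : Type*} [Semigroup S]

theorem my_spow_succ (z : S) (p : ℕ) (hp : 1 ≤ p) : spow z (p + 1) = spow z p * z := by
  cases p with
  | zero => omega
  | succ q => rfl

theorem my_spow_absorbL (f z : S) (h : f * z = z) : ∀ m, f * spow z m = spow z m
  | 0 => h
  | 1 => h
  | (m + 2) => by
    rw [show spow z (m + 2) = spow z (m + 1) * z from rfl, ← mul_assoc,
      my_spow_absorbL f z h (m + 1)]

theorem my_spow_coord {n : ℕ} (c : Fin n → S) (i : Fin n) :
    ∀ N, spow c N i = spow (c i) N
  | 0 => rfl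
  | 1 => rfl
  | (N + 2) => by
    rw [show spow c (N + 2) = spow c (N + 1) * c from rfl,
      show spow (c i) (N + 2) = spow (c i) (N + 1) * c i from rfl]
    show spow c (N + 1) i * c i = _
    rw [my_spow_coord c i (N + 1)]

theorem my_spow_add (z : S) (p : ℕ) (hp : 1 ≤ p) :
    ∀ q, 1 ≤ q → spow z (p + q) = spow z p * spow z q
  | 0, h => by omega
  | 1, _ => my_spow_succ z p hp
  | (q + 2), _ => by
    rw [show p + (q + 2) = (p + (q + 1)) + 1 from by omega,
      my_spow_succ z _ (by omega), my_spow_add z p hp (q + 1) (by omega), mul_assoc]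
    rfl

theorem my_spow_mul_eq (z w : S) (m : ℕ) (hm : 1 ≤ m) (h : spow z m = w)
    (hw : w * w = w) : ∀ t, 1 ≤ t → spow z (m * t) = w
  | 0, h' => by omega
  | 1, _ => by rwa [Nat.mul_one]
  | (t + 2), _ => by
    rw [show m * (t + 2) = m * (t + 1) + m from by ring,
      my_spow_add z _ (by nlinarith) m hm,
      my_spow_mul_eq z w m hm h hw (t + 1) (by omega), h, hw]

theorem my_spow_mem (T : Subsemigroup S) {z : S} (hz : z ∈ T) : ∀ m, spow z m ∈ T
  | 0 => hz
  | 1 => hz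
  | (m + 2) => T.mul_mem (my_spow_mem T hz (m + 1)) hz

theorem my_spow_mem_set (G : Set S) (hmul : ∀ x ∈ G, ∀ y ∈ G, x * y ∈ G) {z : S}
    (hz : z ∈ G) : ∀ m, spow z m ∈ G
  | 0 => hz
  | 1 => hz
  | (m + 2) => hmul _ (my_spow_mem_set G hmul hz (m + 1)) _ hz

theorem my_central (hCl : IsCliffordSG S) (x : S) (hx : x * x = x) (s : S) : x * s = s * x :=
  hCl.2.2 x (Set.mem_univ x) hx s (Set.mem_univ s)

theorem my_unit (hCl : IsCliffordSG S) (E : S → S)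
    (hE : ∀ z : S, (∃ m, 1 ≤ m ∧ E z = spow z m) ∧ E z * E z = E z) (z : S) :
    z * E z = z ∧ E z * z = z ∧ ∃ y, z * y = E z ∧ y * z = E z := by
  obtain ⟨G, -, ⟨hmul, f, hfG, hfid, hinv⟩, hzG⟩ := hCl.2.1 z (Set.mem_univ z)
  obtain ⟨m, hm, hEz⟩ := (hE z).1
  have hEG : E z ∈ G := hEz ▸ my_spow_mem_set G hmul hzG m
  have hEf : E z = f := by
    obtain ⟨y, hyG, hy1, -⟩ := hinv (E z) hEG
    calc E z = E z * f := ((hfid (E z) hEG).2).symm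
    _ = E z * (E z * y) := by rw [hy1]
    _ = (E z * E z) * y := (mul_assoc _ _ _).symm
    _ = E z * y := by rw [(hE z).2]
    _ = f := hy1
  obtain ⟨y, hyG, hy1, hy2⟩ := hinv z hzG
  exact ⟨hEf ▸ (hfid z hzG).2, hEf ▸ (hfid z hzG).1, y, hEf ▸ hy1, hEf ▸ hy2⟩

theorem my_key (hCl : IsCliffordSG S) (E : S → S)
    (hE : ∀ z : S, (∃ m, 1 ≤ m ∧ E z = spow z m) ∧ E z * E z = E z) (e u : S) (he : e * e = e) (h1 : e * u = u) (h2 : ∃ s, u * s = e) :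
    E u = e := by
  have hfu := (hE u).2
  have hef : e * E u = E u := by
    obtain ⟨m, hm, h⟩ := (hE u).1
    rw [h]; exact my_spow_absorbL e u h1 m
  obtain ⟨s, hs⟩ := h2
  have hfe : E u * e = e := by
    calc E u * e = E u * (u * s) := by rw [hs]
    _ = (E u * u) * s := (mul_assoc _ _ _).symm
    _ = u * s := by rw [(my_unit hCl E hE u).2.1]
    _ = e := hs
  calc E u = e * E u := hef.symm
  _ = E u * e := (my_central hCl (E u) hfu e).symm
  _ = e := hfe
end MyAux

/-- For a finite Clifford semigroup `S` and `a₁, …, a_k, b ∈ Sⁿ`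
with `b i ≤ a j i` for all `i, j` (Clifford preorder), if the tuple `e` of
idempotent powers of the coordinates of `b` satisfies
`e i ∈ ⟨a₁ i, …, a_k i⟩` for every `i`, then `b ∈ ⟨a₁, …, a_k⟩` iff
`b ∈ ⟨a₁ * e, …, a_k * e⟩`. -/
theorem stmt13 {S : Type*} [Semigroup S] [Finite S] [Nonempty S]
    (hCl : IsCliffordSG S) (E : S → S)
    (hE : ∀ z : S, (∃ m, 1 ≤ m ∧ E z = spow z m) ∧ E z * E z = E z)
    (n k : ℕ) (a : Fin k → Fin n → S) (b : Fin n → S)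
    (hba : ∀ (j : Fin k) (i : Fin n), E (b i) * E (a j i) = E (b i))
    (he : ∀ i : Fin n, E (b i) ∈ Subsemigroup.closure (Set.range fun j => a j i)) :
    b ∈ Subsemigroup.closure (Set.range a) ↔
      b ∈ Subsemigroup.closure (Set.range fun j => a j * fun i => E (b i)) := by
  set eb : Fin n → S := fun i => E (b i) with heb
  have hebid : ∀ i, eb i * eb i = eb i := fun i => (hE (b i)).2
  have hcent : ∀ i (s : S), eb i * s = s * eb i := fun i s =>
    my_central hCl (eb i) (hebid i) s
  have quad : ∀ (i : Fin n) (x y : S), (x * eb i) * (y * eb i) = (x * y) * eb i := by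
    intro i x y
    calc (x * eb i) * (y * eb i) = x * (eb i * (y * eb i)) := by simp only [mul_assoc]
    _ = x * ((y * eb i) * eb i) := by rw [hcent i]
    _ = x * (y * (eb i * eb i)) := by simp only [mul_assoc]
    _ = x * (y * eb i) := by rw [hebid i]
    _ = (x * y) * eb i := by simp only [mul_assoc]
  constructor
  · intro hb
    have main : ∀ x ∈ Subsemigroup.closure (Set.range a),
        x * eb ∈ Subsemigroup.closure (Set.range fun j => a j * eb) := by
      intro x hx
      induction hx using Subsemigroup.closure_induction with
      | mem x hx =>
        obtain ⟨j, rfl⟩ := hx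
        exact Subsemigroup.subset_closure ⟨j, rfl⟩
      | mul x y hx hy ihx ihy =>
        have hxy : (x * y) * eb = (x * eb) * (y * eb) :=
          funext fun i => (quad i (x i) (y i)).symm
        rw [hxy]
        exact Subsemigroup.mul_mem _ ihx ihy
    have hbe : b * eb = b := funext fun i => (my_unit hCl E hE (b i)).1
    have := main b hb
    rwa [hbe] at this
  · intro hb
    -- Step 1: b = w * eb with w in the closure of the a's
    have step1' : ∀ x ∈ Subsemigroup.closure (Set.range fun j => a j * eb),
        ∃ w ∈ Subsemigroup.closure (Set.range a), x = w * eb := by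
      intro x hx
      induction hx using Subsemigroup.closure_induction with
      | mem x hx =>
        obtain ⟨j, rfl⟩ := hx
        exact ⟨a j, Subsemigroup.subset_closure ⟨j, rfl⟩, rfl⟩
      | mul x y hx hy ihx ihy =>
        obtain ⟨w, hw, rfl⟩ := ihx
        obtain ⟨w', hw', rfl⟩ := ihy
        refine ⟨w * w', Subsemigroup.mul_mem _ hw hw', ?_⟩
        funext i
        show (w i * eb i) * (w' i * eb i) = (w i * w' i) * eb i
        exact quad i (w i) (w' i)
    obtain ⟨w, hw, hbw⟩ := step1' b hb
    -- coordinatewise witnesses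
    have hd' : ∀ (i : Fin n), ∀ x ∈ Subsemigroup.closure (Set.range fun j => a j i),
        ∃ d ∈ Subsemigroup.closure (Set.range a), d i = x := by
      intro i x hx
      induction hx using Subsemigroup.closure_induction with
      | mem x hx =>
        obtain ⟨j, rfl⟩ := hx
        exact ⟨a j, Subsemigroup.subset_closure ⟨j, rfl⟩, rfl⟩
      | mul x y hx hy ihx ihy =>
        obtain ⟨d, hdc, hdi⟩ := ihx
        obtain ⟨d', hdc', hdi'⟩ := ihy
        exact ⟨d * d', Subsemigroup.mul_mem _ hdc hdc', by
          show d i * d' i = x * y; rw [hdi, hdi']⟩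
    have hd : ∀ i, ∃ d ∈ Subsemigroup.closure (Set.range a), d i = eb i :=
      fun i => hd' i (eb i) (he i)
    -- Step 2: one element absorbing all eb i on the left
    have step2 : ∀ L : List (Fin n), ∃ c ∈ Subsemigroup.closure (Set.range a),
        ∀ i ∈ L, eb i * c i = c i := by
      intro L
      induction L with
      | nil => exact ⟨w, hw, by simp⟩
      | cons i L ih =>
        obtain ⟨c, hc, hcL⟩ := ih
        obtain ⟨d, hdc, hdi⟩ := hd i
        refine ⟨c * d, Subsemigroup.mul_mem _ hc hdc, ?_⟩
        intro j hj
        rcases List.mem_cons.1 hj with rfl | hj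
        · show eb j * (c j * d j) = c j * d j
          rw [hdi]
          calc eb j * (c j * eb j) = (eb j * c j) * eb j := (mul_assoc _ _ _).symm
          _ = (c j * eb j) * eb j := by rw [hcent j (c j)]
          _ = c j * (eb j * eb j) := mul_assoc _ _ _
          _ = c j * eb j := by rw [hebid]
        · show eb j * (c j * d j) = c j * d j
          rw [← mul_assoc, hcL j hj]
    obtain ⟨c, hc, hceb⟩ := step2 (List.finRange n)
    have hceb' : ∀ i, eb i * c i = c i := fun i => hceb i (List.mem_finRange i)
    -- Step 3: E (eb i * x i) = eb i for x in the closure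
    have hR : ∀ x ∈ Subsemigroup.closure (Set.range a), ∀ i, E (eb i * x i) = eb i := by
      intro x hx
      induction hx using Subsemigroup.closure_induction with
      | mem x hx =>
        obtain ⟨j, rfl⟩ := hx
        intro i
        apply my_key hCl E hE (eb i) _ (hebid i)
        · rw [← mul_assoc, hebid]
        · obtain ⟨y, hy1, -⟩ := (my_unit hCl E hE (a j i)).2.2
          refine ⟨eb i * y, ?_⟩
          calc (eb i * a j i) * (eb i * y) = ((eb i * a j i) * eb i) * y :=
            (mul_assoc _ _ _).symm
          _ = ((a j i * eb i) * eb i) * y := by rw [hcent i (a j i)]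
          _ = (a j i * (eb i * eb i)) * y := by rw [mul_assoc (a j i)]
          _ = (a j i * eb i) * y := by rw [hebid]
          _ = (eb i * a j i) * y := by rw [hcent i (a j i)]
          _ = eb i * (a j i * y) := mul_assoc _ _ _
          _ = eb i * E (a j i) := by rw [hy1]
          _ = eb i := hba j i
      | mul x y hx hy ihx ihy =>
        intro i
        have hiu : E (eb i * x i) = eb i := ihx i
        have hiv : E (eb i * y i) = eb i := ihy i
        have huv : (eb i * x i) * (eb i * y i) = eb i * (x i * y i) := by
          calc (eb i * x i) * (eb i * y i)
              = eb i * ((x i * eb i) * y i) := by simp only [mul_assoc]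
          _ = eb i * ((eb i * x i) * y i) := by rw [hcent i (x i)]
          _ = (eb i * eb i) * (x i * y i) := by simp only [mul_assoc]
          _ = eb i * (x i * y i) := by rw [hebid i]
        show E (eb i * (x i * y i)) = eb i
        rw [← huv]
        apply my_key hCl E hE (eb i) _ (hebid i)
        · rw [← mul_assoc (eb i) (eb i * x i) (eb i * y i),
            ← mul_assoc (eb i) (eb i) (x i), hebid i]
        · obtain ⟨u', hu1, -⟩ := (my_unit hCl E hE (eb i * x i)).2.2
          obtain ⟨v', hv1, -⟩ := (my_unit hCl E hE (eb i * y i)).2.2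
          refine ⟨v' * u', ?_⟩
          calc ((eb i * x i) * (eb i * y i)) * (v' * u')
              = (eb i * x i) * (((eb i * y i) * v') * u') := by
                simp only [mul_assoc]
          _ = (eb i * x i) * (E (eb i * y i) * u') := by rw [hv1]
          _ = (eb i * x i) * (eb i * u') := by rw [hiv]
          _ = ((eb i * x i) * eb i) * u' := (mul_assoc _ _ _).symm
          _ = ((eb i * x i) * E (eb i * x i)) * u' := by rw [hiu]
          _ = (eb i * x i) * u' := by rw [(my_unit hCl E hE (eb i * x i)).1]
          _ = E (eb i * x i) := hu1
          _ = eb i := hiu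
    have hcE : ∀ i, E (c i) = eb i := fun i => by
      have h := hR c hc i
      rwa [hceb' i] at h
    -- Step 4: common exponent
    choose m hm1 hmE using fun i => (hE (c i)).1
    set N : ℕ := ∏ i, m i with hN
    have hN1 : 1 ≤ N := Finset.one_le_prod' (fun i _ => hm1 i)
    have hcN : ∀ i, spow (c i) N = eb i := by
      intro i
      obtain ⟨t, ht⟩ := Finset.dvd_prod_of_mem m (Finset.mem_univ i)
      have ht1 : 1 ≤ t := by
        rcases Nat.eq_zero_or_pos t with rfl | h
        · rw [Nat.mul_zero] at ht; omega
        · exact h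
      rw [hN, ht]
      exact my_spow_mul_eq (c i) (eb i) (m i) (hm1 i)
        ((hmE i).symm.trans (hcE i)) (hebid i) t ht1
    have hecl : eb ∈ Subsemigroup.closure (Set.range a) := by
      have h := my_spow_mem _ hc N
      have heq : spow c N = eb := funext fun i => (my_spow_coord c i N).trans (hcN i)
      rwa [heq] at h
    rw [hbw]
    exact Subsemigroup.mul_mem _ hw hecl
end

section
/- Let T be a finite semigroup, S an ideal of T, and d ∈ ℕ such that every product of d elements of T lies in S (i.e., the Rees quotient T/S is d-nilpotent). Let n ∈ ℕ, let A be a finite subset of T^n, let b ∈ S^n, and let B := { a_1⋯a_ℓ : 1 ≤ ℓ < 2d, a_1,…,a_ℓ ∈ A } ∩ S^n. Then b belongs to the subsemigroup of T^n generated by A if and only if b belongs to the subsemigroup of S^n generated by B. -/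
/-! A product of `m ≥ 2d` factors from `A` is the product of its first `d` factors and of the
remaining `m - d ≥ d` ones. Both lie in `Sⁿ` because `T/S` is `d`-nilpotent, the first has fewer
than `2d` factors, and the second is split again by induction on `m`. -/

theorem List.exists_eq_append_cons_of_lt_length {α : Type*} {l : List α} {i : ℕ}
    (h : i < l.length) : ∃ l₁ c l₂, l = l₁ ++ c :: l₂ ∧ l₁.length = i :=
  ⟨l.take i, l[i], l.drop (i + 1), by rw [← List.drop_eq_getElem_cons, List.take_append_drop],
    List.length_take_of_le h.le⟩

section sgProd

variable {M : Type*} [Semigroup M]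

theorem sgProd_cons (a y : M) (l : List M) : sgProd a (y :: l) = sgProd (a * y) l := rfl

theorem mul_sgProd (x a : M) (l : List M) : x * sgProd a l = sgProd (x * a) l := by
  induction l generalizing a with
  | nil => rfl
  | cons y l ih => rw [sgProd_cons, ih, sgProd_cons, mul_assoc]

theorem sgProd_mul_sgProd (a a' : M) (l l' : List M) :
    sgProd a l * sgProd a' l' = sgProd a (l ++ a' :: l') := by
  rw [mul_sgProd]
  simp only [sgProd, List.foldl_append, List.foldl_cons]

theorem map_sgProd {N : Type*} [Semigroup N] (f : M →ₙ* N) (a : M) (l : List M) :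
    f (sgProd a l) = sgProd (f a) (l.map f) := by
  induction l generalizing a with
  | nil => rfl
  | cons y l ih => rw [sgProd_cons, ih, map_mul]; rfl

theorem sgProd_mem {P : Subsemigroup M} {a : M} {l : List M} (ha : a ∈ P)
    (hl : ∀ y ∈ l, y ∈ P) : sgProd a l ∈ P := by
  induction l generalizing a with
  | nil => exact ha
  | cons y l ih =>
    rw [List.forall_mem_cons] at hl
    exact ih (P.mul_mem ha hl.1) hl.2

theorem mem_closure_iff_exists_sgProd {A : Set M} {x : M} :
    x ∈ Subsemigroup.closure A ↔ ∃ a l, a ∈ A ∧ (∀ y ∈ l, y ∈ A) ∧ x = sgProd a l := by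
  constructor
  · intro hx
    induction hx using Subsemigroup.closure_induction with
    | mem z hz => exact ⟨z, [], hz, List.forall_mem_nil _, rfl⟩
    | mul z w _ _ ihz ihw =>
      obtain ⟨a, l, ha, hl, rfl⟩ := ihz
      obtain ⟨a', l', ha', hl', rfl⟩ := ihw
      refine ⟨a, l ++ a' :: l', ha, ?_, sgProd_mul_sgProd a a' l l'⟩
      simp only [List.forall_mem_append, List.forall_mem_cons]
      exact ⟨hl, ha', hl'⟩
  · rintro ⟨a, l, ha, hl, rfl⟩
    exact sgProd_mem (Subsemigroup.subset_closure ha) fun y hy =>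
      Subsemigroup.subset_closure (hl y hy)

def shortProducts (A : Set M) (k : ℕ) : Set M :=
  {x | ∃ a l, a ∈ A ∧ (∀ y ∈ l, y ∈ A) ∧ l.length + 1 < k ∧ x = sgProd a l}

theorem sgProd_mem_closure_shortProducts_inter {A P : Set M} {d : ℕ} (hd : 1 ≤ d)
    (hP : ∀ a l, a ∈ A → (∀ y ∈ l, y ∈ A) → d ≤ l.length + 1 → sgProd a l ∈ P)
    {a : M} {l : List M} (ha : a ∈ A) (hl : ∀ y ∈ l, y ∈ A) (haP : sgProd a l ∈ P) :
    sgProd a l ∈ Subsemigroup.closure (shortProducts A (2 * d) ∩ P) := by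
  induction hk : l.length using Nat.strong_induction_on generalizing a l with
  | _ k ih =>
  by_cases hshort : l.length + 1 < 2 * d
  · exact Subsemigroup.subset_closure ⟨⟨a, l, ha, hl, hshort, rfl⟩, haP⟩
  obtain ⟨l₁, c, l₂, rfl, hl₁⟩ := List.exists_eq_append_cons_of_lt_length (l := l) (i := d - 1)
    (by omega)
  simp only [List.length_append, List.length_cons] at hshort hk
  simp only [List.forall_mem_append, List.forall_mem_cons] at hl
  obtain ⟨hl₁A, hc, hl₂A⟩ := hl
  rw [← sgProd_mul_sgProd]
  have head_mem : sgProd a l₁ ∈ shortProducts A (2 * d) ∩ P :=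
    ⟨⟨a, l₁, ha, hl₁A, by omega, rfl⟩, hP a l₁ ha hl₁A (by omega)⟩
  have tail_mem := ih l₂.length (by omega) hc hl₂A (hP c l₂ hc hl₂A (by omega)) rfl
  exact Subsemigroup.mul_mem _ (Subsemigroup.subset_closure head_mem) tail_mem

end sgProd

theorem stmt14_general {T : Type*} [Semigroup T]
    (S : Set T) (d : ℕ) (hd1 : 1 ≤ d)
    (hd : ∀ (a : T) (l : List T), d ≤ l.length + 1 → sgProd a l ∈ S)
    (n : ℕ) (A : Set (Fin n → T))
    (b : Fin n → T) (hb : ∀ i, b i ∈ S) :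
    b ∈ Subsemigroup.closure A ↔
      b ∈ Subsemigroup.closure {x : Fin n → T |
        (∃ (a : Fin n → T) (l : List (Fin n → T)), a ∈ A ∧ (∀ y ∈ l, y ∈ A) ∧
          l.length + 1 < 2 * d ∧ x = sgProd a l) ∧ ∀ i, x i ∈ S} := by
  have long_mem (a : Fin n → T) (l : List (Fin n → T)) (_ : a ∈ A) (_ : ∀ y ∈ l, y ∈ A)
      (hlen : d ≤ l.length + 1) : ∀ i, sgProd a l i ∈ S := fun i => by
    show Pi.evalMulHom _ i (sgProd a l) ∈ S
    rw [map_sgProd]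
    exact hd _ _ (by rwa [List.length_map])
  constructor
  · intro hbA
    obtain ⟨a, l, ha, hl, rfl⟩ := mem_closure_iff_exists_sgProd.mp hbA
    exact sgProd_mem_closure_shortProducts_inter (M := Fin n → T) (P := {x | ∀ i, x i ∈ S}) hd1
      long_mem ha hl hb
  · refine fun hbB => Subsemigroup.closure_le.mpr ?_ hbB
    rintro x ⟨⟨a, l, ha, hl, -, rfl⟩, -⟩
    exact mem_closure_iff_exists_sgProd.mpr ⟨a, l, ha, hl, rfl⟩

/-- Let `S` be an ideal of a finite semigroup `T` such that every
product of `d` (hence of at least `d`) elements of `T` lies in `S` (`d ≥ 1`).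
For a finite `A ⊆ Tⁿ`, `b ∈ Sⁿ`, and
`B := { a₁⋯a_ℓ | 1 ≤ ℓ < 2d, a₁, …, a_ℓ ∈ A } ∩ Sⁿ`, we have
`b ∈ ⟨A⟩` iff `b ∈ ⟨B⟩`. -/
theorem stmt14 {T : Type*} [Semigroup T] [Finite T] [Nonempty T]
    (S : Set T) (hS : IsIdeal S) (d : ℕ) (hd1 : 1 ≤ d)
    (hd : ∀ (a : T) (l : List T), d ≤ l.length + 1 → sgProd a l ∈ S)
    (n : ℕ) (A : Set (Fin n → T)) (hA : A.Finite)
    (b : Fin n → T) (hb : ∀ i, b i ∈ S) :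
    b ∈ Subsemigroup.closure A ↔
      b ∈ Subsemigroup.closure {x : Fin n → T |
        (∃ (a : Fin n → T) (l : List (Fin n → T)), a ∈ A ∧ (∀ y ∈ l, y ∈ A) ∧
          l.length + 1 < 2 * d ∧ x = sgProd a l) ∧ ∀ i, x i ∈ S} :=
  stmt14_general S d hd1 hd n A b hb
end

section
/- Let S be a finite semigroup, let e ∈ S be idempotent, and let a ∈ S satisfy ea = ae = a and a ≠ a^m for all m ≥ 2 (so the subsemigroup ⟨a⟩ generated by a is not a group). Let n, k ∈ ℕ and C_1, …, C_k ⊆ {1,…,n}. Define b, c_1, …, c_k ∈ S^n by b(i) := a for all i, and c_j(i) := a if i ∈ C_j and c_j(i) := e otherwise. Then b belongs to the subsemigroup of S^n generated by {c_1, …, c_k} if and only if there exist indices j_1 < j_2 < ⋯ < j_m in {1,…,k} such that C_{j_1}, …, C_{j_m} are pairwise disjoint and C_{j_1} ∪ ⋯ ∪ C_{j_m} = {1,…,n}. -/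
def epow {S : Type*} [Semigroup S] (e a : S) : ℕ → S
  | 0 => e
  | (r+1) => epow e a r * a

section Aux
variable {S : Type*} [Semigroup S] {e a : S}

theorem epow_mul_e (he : e * e = e) (hae : a * e = a) (r : ℕ) :
    epow e a r * e = epow e a r := by
  induction r with
  | zero => exact he
  | succ r ih =>
    show epow e a r * a * e = epow e a r * a
    rw [mul_assoc, hae]

theorem epow_add (he : e * e = e) (hae : a * e = a) (r s : ℕ) :
    epow e a r * epow e a s = epow e a (r + s) := by
  induction s with
  | zero => simpa [epow] using epow_mul_e he hae r
  | succ s ih =>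
    show epow e a r * (epow e a s * a) = epow e a (r + s) * a
    rw [← mul_assoc, ih]

theorem epow_eq_spow (hea : e * a = a) (r : ℕ) : epow e a (r+1) = spow a (r+1) := by
  induction r with
  | zero => simpa [epow, spow] using hea
  | succ r ih =>
    show epow e a (r+1) * a = spow a (r+1) * a
    rw [ih]

theorem epow_eq_a_iff (he : e * e = e) (hea : e * a = a)
    (hng : ∀ m, 2 ≤ m → a ≠ spow a m) (r : ℕ) : epow e a r = a ↔ r = 1 := by
  constructor
  · intro h
    match r with
    | 0 =>
      exfalso
      apply hng 2 le_rfl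
      show a = spow a 1 * a
      simp only [spow]
      rw [← h]; simp [epow, he]
    | 1 => rfl
    | (r+2) =>
      exfalso
      exact hng (r+2) (by omega) (by rw [← epow_eq_spow hea (r+1), h])
  · rintro rfl; simpa [epow] using hea

theorem two_le_countP {α : Type*} [DecidableEq α] {l : List α} {p : α → Bool} {x y : α}
    (hxy : x ≠ y) (hx : x ∈ l) (hy : y ∈ l) (hpx : p x) (hpy : p y) :
    2 ≤ l.countP p := by
  rw [List.countP_eq_length_filter]
  have hsub : ({x, y} : Finset α) ⊆ (l.filter p).toFinset := by
    intro z hz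
    simp only [Finset.mem_insert, Finset.mem_singleton] at hz
    rcases hz with rfl | rfl <;>
      simp [List.mem_toFinset, List.mem_filter, hx, hy, hpx, hpy]
  calc 2 = ({x, y} : Finset α).card := (Finset.card_pair hxy).symm
    _ ≤ (l.filter p).toFinset.card := Finset.card_le_card hsub
    _ ≤ (l.filter p).length := List.toFinset_card_le _

end Aux

/-- Let `S` be a finite semigroup, `e` idempotent, `a` with
`e * a = a * e = a` and `a ≠ a ^ m` for all `m ≥ 2` (so `⟨a⟩` is not a group).
For subsets `C₁, …, C_k ⊆ {1, …, n}` let `b i = a` and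
`c_j i = a` if `i ∈ C_j`, `= e` otherwise. Then `b ∈ ⟨c₁, …, c_k⟩` iff there
are indices `j₁ < ⋯ < j_m` such that `C_{j₁}, …, C_{j_m}` are pairwise
disjoint and their union is `{1, …, n}`. -/
theorem stmt17 {S : Type*} [Semigroup S] [Finite S] [Nonempty S]
    (e a : S) (he : e * e = e) (hea : e * a = a) (hae : a * e = a)
    (hng : ∀ m, 2 ≤ m → a ≠ spow a m)
    (n k : ℕ) (C : Fin k → Finset (Fin n)) :
    (fun _ : Fin n => a) ∈ Subsemigroup.closure
        (Set.range fun j : Fin k => fun i : Fin n => if i ∈ C j then a else e) ↔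
      ∃ (m : ℕ) (js : Fin m → Fin k), 1 ≤ m ∧ StrictMono js ∧
        (∀ p q : Fin m, p ≠ q → Disjoint (C (js p)) (C (js q))) ∧
        Finset.univ.biUnion (fun p : Fin m => C (js p)) = Finset.univ := by
  classical
  set c : Fin k → Fin n → S := fun j i => if i ∈ C j then a else e with hc
  have hcj : ∀ j : Fin k, c j = fun i => epow e a (if i ∈ C j then 1 else 0) := by
    intro j; funext i
    by_cases h : i ∈ C j <;> simp [hc, h, epow, hea]
  -- representation of closure elements
  have h1 : ∀ x ∈ Subsemigroup.closure (Set.range c),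
      ∃ L : List (Fin k), L ≠ [] ∧
        x = fun i => epow e a (L.countP fun j => decide (i ∈ C j)) := by
    intro x hx
    induction hx using Subsemigroup.closure_induction with
    | mem x hx =>
      obtain ⟨j, rfl⟩ := hx
      refine ⟨[j], by simp, ?_⟩
      rw [hcj j]; funext i
      by_cases h : i ∈ C j <;> simp [h]
    | mul x y hx hy ihx ihy =>
      obtain ⟨L, hL, rfl⟩ := ihx
      obtain ⟨L', hL', rfl⟩ := ihy
      refine ⟨L ++ L', by simp [hL], ?_⟩
      funext i
      rw [List.countP_append]
      exact (Pi.mul_apply _ _ i).trans (epow_add he hae _ _)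
  have h2 : ∀ L : List (Fin k), L ≠ [] →
      (fun i => epow e a (L.countP fun j => decide (i ∈ C j))) ∈
        Subsemigroup.closure (Set.range c) := by
    intro L
    induction L with
    | nil => simp
    | cons j L ih =>
      intro _
      rcases eq_or_ne L [] with rfl | hL
      · have : (fun i => epow e a (List.countP (fun j' => decide (i ∈ C j')) [j]))
            = c j := by
          rw [hcj j]; funext i
          by_cases h : i ∈ C j <;> simp [h]
        rw [this]
        exact Subsemigroup.subset_closure ⟨j, rfl⟩
      · have hmul := (Subsemigroup.closure (Set.range c)).mul_mem
          (Subsemigroup.subset_closure (⟨j, rfl⟩ : c j ∈ Set.range c)) (ih hL)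
        have : c j * (fun i => epow e a (L.countP fun j' => decide (i ∈ C j')))
            = fun i => epow e a ((j :: L).countP fun j' => decide (i ∈ C j')) := by
          funext i
          rw [List.countP_cons, hcj j]
          refine (Pi.mul_apply _ _ i).trans ?_
          rw [epow_add he hae, add_comm]
          simp
        rwa [this] at hmul
  constructor
  · intro hb
    obtain ⟨L, hL, hLeq⟩ := h1 _ hb
    have hcount : ∀ i : Fin n, (L.countP fun j => decide (i ∈ C j)) = 1 := by
      intro i
      have := congrFun hLeq i
      exact (epow_eq_a_iff he hea hng _).mp this.symm
    set J : Finset (Fin k) := L.toFinset.filter (fun j => (C j).Nonempty) with hJ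
    rcases J.eq_empty_or_nonempty with hJe | hJne
    · -- n = 0 case
      have hn : ∀ i : Fin n, False := by
        intro i
        have h0 : 0 < L.countP fun j => decide (i ∈ C j) := by
          rw [hcount i]; norm_num
        obtain ⟨j, hjL, hjC⟩ := List.countP_pos_iff.mp h0
        have : j ∈ J := by
          rw [hJ, Finset.mem_filter, List.mem_toFinset]
          exact ⟨hjL, ⟨i, by simpa using hjC⟩⟩
        simp [hJe] at this
      obtain ⟨j0, hj0⟩ := List.exists_mem_of_ne_nil L hL
      refine ⟨1, fun _ => j0, le_rfl, ?_, ?_, ?_⟩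
      · intro p q hpq
        exact absurd (Subsingleton.elim p q) (ne_of_lt hpq)
      · intro p q hpq
        exact absurd (Subsingleton.elim p q) hpq
      · apply Finset.eq_univ_iff_forall.mpr
        intro i; exact (hn i).elim
    · refine ⟨J.card, J.orderEmbOfFin rfl, Finset.card_pos.mpr hJne,
        (J.orderEmbOfFin rfl).strictMono, ?_, ?_⟩
      · intro p q hpq
        rw [Finset.disjoint_left]
        intro i hip hiq
        have hne : J.orderEmbOfFin rfl p ≠ J.orderEmbOfFin rfl q := by
          intro h; exact hpq ((J.orderEmbOfFin rfl).injective h)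
        have hp : (J.orderEmbOfFin rfl p : Fin k) ∈ L :=
          List.mem_toFinset.mp (Finset.mem_filter.mp (Finset.orderEmbOfFin_mem J rfl p)).1
        have hq : (J.orderEmbOfFin rfl q : Fin k) ∈ L :=
          List.mem_toFinset.mp (Finset.mem_filter.mp (Finset.orderEmbOfFin_mem J rfl q)).1
        have h2le := two_le_countP (p := fun j => decide (i ∈ C j)) hne hp hq
          (by simpa using hip) (by simpa using hiq)
        rw [hcount i] at h2le
        omega
      · apply Finset.eq_univ_iff_forall.mpr
        intro i
        have h0 : 0 < L.countP fun j => decide (i ∈ C j) := by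
          rw [hcount i]; norm_num
        obtain ⟨j, hjL, hjC⟩ := List.countP_pos_iff.mp h0
        have hjC' : i ∈ C j := by simpa using hjC
        have hjJ : j ∈ J := by
          rw [hJ, Finset.mem_filter, List.mem_toFinset]
          exact ⟨hjL, ⟨i, hjC'⟩⟩
        have : j ∈ Set.range (J.orderEmbOfFin rfl) := by
          rw [Finset.range_orderEmbOfFin]; exact hjJ
        obtain ⟨p, hp⟩ := this
        exact Finset.mem_biUnion.mpr ⟨p, Finset.mem_univ p, by rw [hp]; exact hjC'⟩
  · rintro ⟨m, js, hm, hmono, hdisj, hunion⟩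
    set L : List (Fin k) := (List.finRange m).map js with hLdef
    have hL : L ≠ [] := by
      intro h
      have := congrArg List.length h
      simp [hLdef] at this
      omega
    have key : (fun i : Fin n => epow e a (L.countP fun j => decide (i ∈ C j)))
        = fun _ : Fin n => a := by
      funext i
      rw [epow_eq_a_iff he hea hng]
      rw [hLdef, List.countP_map]
      obtain ⟨p0, _, hp0⟩ := Finset.mem_biUnion.mp
        (hunion ▸ Finset.mem_univ i)
      have huniq : ∀ p : Fin m, i ∈ C (js p) → p = p0 := by
        intro p hp
        by_contra hne
        exact (Finset.disjoint_left.mp (hdisj p p0 hne)) hp hp0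
      have hnodup : ((List.finRange m).filter
          ((fun j => decide (i ∈ C j)) ∘ js)).Nodup :=
        (List.nodup_finRange m).filter _
      rw [List.countP_eq_length_filter, ← List.toFinset_card_of_nodup hnodup]
      rw [Finset.card_eq_one]
      refine ⟨p0, ?_⟩
      ext p
      simp only [List.mem_toFinset, List.mem_filter, List.mem_finRange,
        Finset.mem_singleton, true_and, Function.comp]
      constructor
      · intro hp; exact huniq p (by simpa using hp)
      · rintro rfl; simpa using hp0
    have := h2 L hL
    rwa [key] at this
end

section
/- Let T_3 be the monoid of all transformations of {0,1,∞} acting on the right, elements written as triples (0^g, 1^g, ∞^g), and set zero := (0,0,∞), one := (1,1,∞), mid := (0,1,∞), ztoo := (1,∞,∞), ztoz := (0,∞,∞), otoz := (∞,0,∞). Fix n, m ∈ ℕ and transformations f_1, …, f_m of {1,…,n}, and work in T_3^{n²+mn} with coordinatewise composition. For g : {1,…,n} → {1,…,n}, the mapping tuple m_g is defined by m_g(x) := one if x ∈ {(j−1)n + j^g : j ∈ {1,…,n}} and m_g(x) := zero otherwise. For i ∈ {1,…,m}, the choice tuple c_i is defined by c_i(x) := mid for x ∈ {1,…,n²}, c_i(x)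 := ztoo for x ∈ {n²+(i−1)n+1, …, n²+in}, and c_i(x) := ztoz otherwise. For i ∈ {1,…,m} and j, k ∈ {1,…,n}, the application tuple a_{ijk} is defined as follows: if k^{f_i} ≠ k, then a_{ijk}(x) := otoz for x ∈ {(j−1)n+k, n²+(i−1)n+j}, a_{ijk}(x) := ztoo for x = (j−1)n+k^{f_i}, and a_{ijk}(x) := mid otherwise; if k^{f_i} = k, then a_{ijk}(x) := otoz for x = n²+(i−1)n+j and a_{ijk}(x) := mid otherwise. Then for every g : {1,…,n} → {1,…,n} and every i ∈ {1,…,m}: m_g · c_i · a_{i,1,1^g} · a_{i,2,2^g} ⋯ a_{i,n,n^g} = m_{gf_i}, where gf_i denotes the composition first g then f_i (x^{gf_i} = (x^g)^{f_i}). -/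
/-- The three points `0`, `1`, `∞`. -/
inductive Pt : Type
  | p0 | p1 | pinf
  deriving DecidableEq

/-- The full transformation monoid on `{0, 1, ∞}`. -/
abbrev T3 : Type := Pt → Pt

/-- Transformations act on the right: the product `a * b` is "first `a`, then `b`". -/
instance : Semigroup T3 where
  mul a b := fun x => b (a x)
  mul_assoc _ _ _ := rfl

/-- `zero = (0, 0, ∞)`. -/
def tZero : T3 := fun x => match x with | .p0 => .p0 | .p1 => .p0 | .pinf => .pinf
/-- `one = (1, 1, ∞)`. -/
def tOne : T3 := fun x => match x with | .p0 => .p1 | .p1 => .p1 | .pinf => .pinf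
/-- `mid = (0, 1, ∞)`. -/
def tMid : T3 := fun x => match x with | .p0 => .p0 | .p1 => .p1 | .pinf => .pinf
/-- `ztoo = (1, ∞, ∞)`. -/
def tZtoo : T3 := fun x => match x with | .p0 => .p1 | .p1 => .pinf | .pinf => .pinf
/-- `ztoz = (0, ∞, ∞)`. -/
def tZtoz : T3 := fun x => match x with | .p0 => .p0 | .p1 => .pinf | .pinf => .pinf
/-- `otoz = (∞, 0, ∞)`. -/
def tOtoz : T3 := fun x => match x with | .p0 => .pinf | .p1 => .p0 | .pinf => .pinf

/-- The mapping tuple `m_g ∈ T3^(n² + mn)` of `g : [n] → [n]`: coordinates are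
indexed (0-based) by `{0, …, n² + mn - 1}`, and `m_g` is `one` at the positions
`j * n + g j` (`j ∈ [n]`) and `zero` elsewhere. -/
def mapTuple (n m : ℕ) (g : Fin n → Fin n) : Fin (n ^ 2 + m * n) → T3 :=
  fun x => if ∃ j : Fin n, (x : ℕ) = (j : ℕ) * n + (g j : ℕ) then tOne else tZero

/-- The choice tuple `c_i` for `i ∈ [m]`: `mid` on the first `n²` coordinates,
`ztoo` on the `i`-th block of `n` coordinates among the last `m * n` ones, and
`ztoz` elsewhere. -/
def choiceTuple (n m : ℕ) (i : Fin m) : Fin (n ^ 2 + m * n) → T3 :=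
  fun x =>
    if (x : ℕ) < n ^ 2 then tMid
    else if n ^ 2 + (i : ℕ) * n ≤ (x : ℕ) ∧ (x : ℕ) < n ^ 2 + (i : ℕ) * n + n then tZtoo
    else tZtoz

/-- The application tuple `a_{i j k}` ("apply `f i` on coordinate `j` to `k`"):
if `f i k ≠ k` it is `otoz` at positions `j * n + k` and `n² + i * n + j`,
`ztoo` at position `j * n + f i k`, and `mid` elsewhere; if `f i k = k` it is
`otoz` at position `n² + i * n + j` and `mid` elsewhere. -/
def applTuple (n m : ℕ) (f : Fin m → Fin n → Fin n) (i : Fin m) (j k : Fin n) :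
    Fin (n ^ 2 + m * n) → T3 :=
  fun x =>
    if f i k = k then
      if (x : ℕ) = n ^ 2 + (i : ℕ) * n + (j : ℕ) then tOtoz else tMid
    else
      if (x : ℕ) = (j : ℕ) * n + (k : ℕ) ∨ (x : ℕ) = n ^ 2 + (i : ℕ) * n + (j : ℕ) then tOtoz
      else if (x : ℕ) = (j : ℕ) * n + (f i k : ℕ) then tZtoo
      else tMid

-- AUX START
instance : Monoid T3 where
  __ := (inferInstance : Semigroup T3)
  one := tMid
  one_mul a := by funext p; show a (tMid p) = a p; cases p <;> rfl
  mul_one a := by funext p; show tMid (a p) = a p; cases a p <;> rfl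

lemma blockEq {n a b c d : ℕ} (hb : b < n) (hd : d < n)
    (h : a * n + b = c * n + d) : a = c ∧ b = d := by
  have hac : a = c := by
    rcases Nat.lt_trichotomy a c with h' | h' | h'
    · exfalso
      have h3 : (a + 1) * n ≤ c * n := Nat.mul_le_mul_right n (Nat.succ_le_of_lt h')
      nlinarith
    · exact h'
    · exfalso
      have h3 : (c + 1) * n ≤ a * n := Nat.mul_le_mul_right n (Nat.succ_le_of_lt h')
      nlinarith
  subst hac
  exact ⟨rfl, Nat.add_left_cancel h⟩

lemma blockEq' {n a c y : ℕ} (hy : y < n) (h1 : c * n ≤ a * n + y)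
    (h2 : a * n + y < c * n + n) : a = c := by
  rcases Nat.lt_trichotomy a c with h | h | h
  · exfalso
    have h3 : (a + 1) * n ≤ c * n := Nat.mul_le_mul_right n (Nat.succ_le_of_lt h)
    nlinarith
  · exact h
  · exfalso
    have h3 : (c + 1) * n ≤ a * n := Nat.mul_le_mul_right n (Nat.succ_le_of_lt h)
    nlinarith

lemma foldl_mul {M : Type*} [Monoid M] (l : List M) (b : M) :
    l.foldl (· * ·) b = b * l.prod := by
  induction l generalizing b with
  | nil => simp
  | cons a t ih => simp [ih, mul_assoc]

lemma foldl_apply {ι M : Type*} [Semigroup M] (l : List (ι → M)) (b : ι → M) (x : ι) :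
    (l.foldl (· * ·) b) x = (l.map (fun t => t x)).foldl (· * ·) (b x) := by
  induction l generalizing b with
  | nil => rfl
  | cons a t ih => simpa using ih (b * a)

lemma prod_ofFn_eq_one {M : Type*} [Monoid M] {n : ℕ} (v : Fin n → M)
    (h : ∀ j, v j = 1) : (List.ofFn v).prod = 1 := by
  apply List.prod_eq_one
  intro a ha
  rw [List.mem_ofFn] at ha
  obtain ⟨j, rfl⟩ := ha
  exact h j

lemma prod_ofFn_eq_single {M : Type*} [Monoid M] :
    ∀ {n : ℕ} (v : Fin n → M) (j0 : Fin n), (∀ j, j ≠ j0 → v j = 1) →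
      (List.ofFn v).prod = v j0 := by
  intro n
  induction n with
  | zero => intro v j0 _; exact j0.elim0
  | succ n ih =>
    intro v j0 h
    rw [List.ofFn_succ, List.prod_cons]
    rcases Fin.eq_zero_or_eq_succ j0 with rfl | ⟨j0', rfl⟩
    · have ht : (List.ofFn fun j : Fin n => v j.succ).prod = 1 := by
        apply prod_ofFn_eq_one
        intro j; exact h _ (Fin.succ_ne_zero j)
      rw [ht, mul_one]
    · rw [h 0 (Fin.succ_ne_zero j0').symm, one_mul]
      exact ih _ j0' (fun j hj => h j.succ (fun hh => hj (Fin.succ_injective _ hh)))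
-- AUX END
/-- `m_g · c_i · a_{i,1,1^g} ⋯ a_{i,n,n^g} = m_{g f_i}`. -/
theorem stmt18 (n m : ℕ) (f : Fin m → Fin n → Fin n) (g : Fin n → Fin n) (i : Fin m) :
    sgProd (mapTuple n m g)
      (choiceTuple n m i :: List.ofFn (fun j : Fin n => applTuple n m f i j (g j)))
      = mapTuple n m (fun x => f i (g x)) := by
  funext x
  unfold sgProd
  simp only [List.foldl_cons]
  rw [foldl_apply, List.map_ofFn, foldl_mul, Pi.mul_apply]
  simp only [Function.comp_def]
  by_cases hx : (x : ℕ) < n ^ 2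
  · -- Case A : first block of coordinates
    have hn : 0 < n := by
      rcases Nat.eq_zero_or_pos n with rfl | h
      · simp at hx
      · exact h
    obtain ⟨jv, kv, hjv, hkv, hxe⟩ :
        ∃ jv kv, jv < n ∧ kv < n ∧ (x : ℕ) = jv * n + kv := by
      refine ⟨(x : ℕ) / n, (x : ℕ) % n, ?_, Nat.mod_lt _ hn, ?_⟩
      · rw [Nat.div_lt_iff_lt_mul hn]
        calc (x : ℕ) < n ^ 2 := hx
        _ = n * n := sq n
      · have h1 := Nat.div_add_mod (x : ℕ) n
        linarith
    set jF : Fin n := ⟨jv, hjv⟩ with hjFdef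
    set kF : Fin n := ⟨kv, hkv⟩ with hkFdef
    have e1 : ∀ (j' c : Fin n), ((x : ℕ) = (j' : ℕ) * n + (c : ℕ)) ↔ (j' = jF ∧ c = kF) := by
      intro j' c
      rw [hxe]
      constructor
      · intro h
        obtain ⟨h1, h2⟩ := blockEq hkv c.isLt h
        exact ⟨Fin.ext h1.symm, Fin.ext h2.symm⟩
      · rintro ⟨rfl, rfl⟩
        rfl
    have e3 : ∀ a b : ℕ, (x : ℕ) ≠ n ^ 2 + a + b := by
      intro a b h
      linarith
    have hchoice : choiceTuple n m i x = tMid := by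
      unfold choiceTuple; rw [if_pos hx]
    have hmapA : ∀ h : Fin n → Fin n,
        mapTuple n m h x = (if h jF = kF then tOne else tZero) := by
      intro h
      unfold mapTuple
      by_cases hc : h jF = kF
      · rw [if_pos ⟨jF, (e1 jF (h jF)).mpr ⟨rfl, hc⟩⟩, if_pos hc]
      · rw [if_neg, if_neg hc]
        rintro ⟨j', hj'⟩
        obtain ⟨rfl, h2⟩ := (e1 j' (h j')).mp hj'
        exact hc h2
    have happl : ∀ j' : Fin n, j' ≠ jF → applTuple n m f i j' (g j') x = tMid := by
      intro j' hj'
      unfold applTuple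
      split
      · rw [if_neg (e3 _ _)]
      · rw [if_neg (not_or.mpr ⟨fun hh => hj' ((e1 _ _).mp hh).1, e3 _ _⟩),
          if_neg (fun hh => hj' ((e1 _ _).mp hh).1)]
    have hprod : (List.ofFn fun j => applTuple n m f i j (g j) x).prod
        = applTuple n m f i jF (g jF) x :=
      prod_ofFn_eq_single _ jF (fun j hj => happl j hj)
    have hmap2 : mapTuple n m (fun y => f i (g y)) x
        = (if f i (g jF) = kF then tOne else tZero) := hmapA _
    rw [hprod, hchoice, hmapA g, hmap2]
    unfold applTuple
    by_cases hk : f i (g jF) = g jF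
    · rw [if_pos hk, if_neg (e3 _ _)]
      by_cases hgk : g jF = kF
      · rw [if_pos hgk, if_pos (hk.trans hgk)]
        funext p; cases p <;> rfl
      · rw [if_neg hgk, if_neg (fun hh => hgk (hk.symm.trans hh))]
        funext p; cases p <;> rfl
    · rw [if_neg hk]
      by_cases hgk : g jF = kF
      · rw [if_pos (Or.inl ((e1 jF (g jF)).mpr ⟨rfl, hgk⟩)), if_pos hgk,
          if_neg (fun hh : f i (g jF) = kF => hk (hh.trans hgk.symm))]
        funext p; cases p <;> rfl
      · have hno : ¬((x : ℕ) = (jF : ℕ) * n + ((g jF : Fin n) : ℕ) ∨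
            (x : ℕ) = n ^ 2 + (i : ℕ) * n + (jF : ℕ)) :=
          not_or.mpr ⟨fun hh => hgk ((e1 _ _).mp hh).2, e3 _ _⟩
        by_cases hfk : f i (g jF) = kF
        · rw [if_neg hno, if_pos ((e1 jF (f i (g jF))).mpr ⟨rfl, hfk⟩), if_neg hgk, if_pos hfk]
          funext p; cases p <;> rfl
        · rw [if_neg hno, if_neg (fun hh => hfk ((e1 _ _).mp hh).2), if_neg hgk, if_neg hfk]
          funext p; cases p <;> rfl
  · -- Case B : second block of coordinates
    push_neg at hx
    have hxlt : (x : ℕ) < n ^ 2 + m * n := x.isLt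
    have hn : 0 < n := by
      rcases Nat.eq_zero_or_pos n with rfl | h
      · exfalso; simp at hxlt
      · exact h
    obtain ⟨iv, jv, hiv, hjv, hre⟩ :
        ∃ iv jv, iv < m ∧ jv < n ∧ (x : ℕ) = n ^ 2 + (iv * n + jv) := by
      refine ⟨((x : ℕ) - n ^ 2) / n, ((x : ℕ) - n ^ 2) % n, ?_, Nat.mod_lt _ hn, ?_⟩
      · rw [Nat.div_lt_iff_lt_mul hn]
        have h3 : (x : ℕ) - n ^ 2 + n ^ 2 = x := Nat.sub_add_cancel hx
        linarith
      · have h1 := Nat.div_add_mod ((x : ℕ) - n ^ 2) n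
        have h3 : (x : ℕ) - n ^ 2 + n ^ 2 = x := Nat.sub_add_cancel hx
        linarith
    set iF : Fin m := ⟨iv, hiv⟩ with hiFdef
    set jB : Fin n := ⟨jv, hjv⟩ with hjBdef
    have e3 : ∀ (j' c : Fin n), (x : ℕ) ≠ (j' : ℕ) * n + (c : ℕ) := by
      intro j' c h
      have h1 : ((j' : ℕ) + 1) * n ≤ n * n :=
        Nat.mul_le_mul_right n (Nat.succ_le_of_lt j'.isLt)
      have h2 : n ^ 2 = n * n := sq n
      nlinarith [c.isLt]
    have e4 : ∀ j' : Fin n,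
        ((x : ℕ) = n ^ 2 + (i : ℕ) * n + (j' : ℕ)) ↔ (iF = i ∧ j' = jB) := by
      intro j'
      constructor
      · intro h
        have h' : iv * n + jv = (i : ℕ) * n + (j' : ℕ) := by linarith
        obtain ⟨h1, h2⟩ := blockEq hjv j'.isLt h'
        exact ⟨Fin.ext h1, Fin.ext h2.symm⟩
      · rintro ⟨h1, rfl⟩
        have h1' : iv = (i : ℕ) := congrArg Fin.val h1
        rw [hre, ← h1']
        exact (add_assoc (n ^ 2) (iv * n) jv).symm
    have hmapB : ∀ h : Fin n → Fin n, mapTuple n m h x = tZero := by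
      intro h
      unfold mapTuple
      rw [if_neg]
      rintro ⟨j', hj'⟩
      exact e3 j' (h j') hj'
    have hchoiceB : choiceTuple n m i x = (if iF = i then tZtoo else tZtoz) := by
      unfold choiceTuple
      rw [if_neg (not_lt.mpr hx)]
      by_cases hi : iF = i
      · have h1' : iv = (i : ℕ) := congrArg Fin.val hi
        rw [if_pos, if_pos hi]
        constructor
        · rw [hre, ← h1']; linarith
        · rw [hre, ← h1']; linarith
      · rw [if_neg, if_neg hi]
        rintro ⟨h1, h2⟩
        rw [hre] at h1 h2
        exact hi (Fin.ext (blockEq' hjv (by linarith) (by linarith)))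
    have happlB : ∀ j' : Fin n,
        applTuple n m f i j' (g j') x = (if iF = i ∧ j' = jB then tOtoz else tMid) := by
      intro j'
      unfold applTuple
      split
      · by_cases hc : iF = i ∧ j' = jB
        · rw [if_pos ((e4 j').mpr hc), if_pos hc]
        · rw [if_neg (fun hh => hc ((e4 j').mp hh)), if_neg hc]
      · by_cases hc : iF = i ∧ j' = jB
        · rw [if_pos (Or.inr ((e4 j').mpr hc)), if_pos hc]
        · rw [if_neg (not_or.mpr ⟨e3 _ _, fun hh => hc ((e4 j').mp hh)⟩),
            if_neg (e3 _ _), if_neg hc]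
    by_cases hi : iF = i
    · have hprod : (List.ofFn fun j => applTuple n m f i j (g j) x).prod
          = applTuple n m f i jB (g jB) x :=
        prod_ofFn_eq_single _ jB (fun j hj => by
          rw [happlB j, if_neg (fun hc => hj hc.2)]; rfl)
      rw [hprod, hchoiceB, if_pos hi, hmapB g, hmapB (fun y => f i (g y)),
        happlB jB, if_pos ⟨hi, rfl⟩]
      funext p; cases p <;> rfl
    · have hprod : (List.ofFn fun j => applTuple n m f i j (g j) x).prod = 1 :=
        prod_ofFn_eq_one _ (fun j => by
          rw [happlB j, if_neg (fun hc => hi hc.1)]; rfl)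
      rw [hprod, hchoiceB, if_neg hi, hmapB g, hmapB (fun y => f i (g y))]
      funext p; cases p <;> rfl
end
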